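/- arXiv:2505.07123 — 7 statements merged into one kernel-verified Lean document; each statement's English description precedes it below -/
import Mathlib

section
/- Lower bound for the δ-optimal recovery error: for any δ > 0, R_δ(A,W)_H ≥ μ_{N_δ}/ξ_{N_δ}. -/
noncomputable section

open Filter
open scoped ENNReal RealInnerProductSpace

variable {H : Type*} [NormedAddCommGroup H] [InnerProductSpace ℝ H] [CompleteSpace H]

/-- `f` belongs to the source set `W`. -/
def MemW (w : ℕ → H) (ξ : ℕ → ℝ) (f : H) : Prop :=
  Summable fun k => ξ k ^ 2 * ⟪f, w k⟫ ^ 2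

/-- The `W`-norm of `f`. -/
def normW (w : ℕ → H) (ξ : ℕ → ℝ) (f : H) : ℝ :=
  Real.sqrt (∑' k, ξ k ^ 2 * ⟪f, w k⟫ ^ 2)

/-- The unbounded operator `A`, defined spectrally by `A f = ∑ μ_k ⟨f, w_k⟩ w_k`. -/
def opA (w : ℕ → H) (μ : ℕ → ℝ) (f : H) : H :=
  ∑' k, (μ k * ⟪f, w k⟫) • w k

/-- The worst case recovery error `ε_δ(A, W, G, Ψ)_H` of the pair `(G, Ψ)`. -/
def recErr (w : ℕ → H) (μ ξ : ℕ → ℝ) (δ : ℝ) {N : ℕ}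
    (G : H → Fin N → ℝ) (Ψ : (Fin N → ℝ) → H) : ℝ≥0∞ :=
  ⨆ (f : H) (_ : MemW w ξ f ∧ normW w ξ f ≤ 1) (fδ : H) (_ : ‖f - fδ‖ ≤ δ),
    ENNReal.ofReal ‖opA w μ f - Ψ (G fδ)‖

/-- The `(N,δ)`-optimal recovery error `R_{N,δ}(A, W)_H`. -/
def Ropt (w : ℕ → H) (μ ξ : ℕ → ℝ) (δ : ℝ) (N : ℕ) : ℝ≥0∞ :=
  ⨅ (G : H → Fin N → ℝ) (_ : Continuous G) (Ψ : (Fin N → ℝ) → H),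
    recErr w μ ξ δ G Ψ

/-- The `δ`-optimal recovery error `R_δ(A, W)_H`. -/
def RoptAll (w : ℕ → H) (μ ξ : ℕ → ℝ) (δ : ℝ) : ℝ≥0∞ :=
  ⨅ N : ℕ, Ropt w μ ξ δ N

/-- The critical index `N_δ = min {N ≥ 0 : ξ_N ≥ 1/δ}`. -/
def Ncrit (ξ : ℕ → ℝ) (δ : ℝ) : ℕ := sInf {N : ℕ | 1 / δ ≤ ξ N}

/-- lower bound `R_δ(A,W)_H ≥ μ_{N_δ} / ξ_{N_δ}`. -/
theorem stmt0
    (w : ℕ → H) (hw_on : Orthonormal ℝ w)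
    (hw_dense : Dense (Submodule.span ℝ (Set.range w) : Set H))
    (μ ξ : ℕ → ℝ)
    (hμ0 : 0 < μ 0) (hμmono : Monotone μ) (hμtop : Tendsto μ atTop atTop)
    (hξ0 : 0 < ξ 0) (hξmono : Monotone ξ) (hξtop : Tendsto ξ atTop atTop)
    (hratio : Tendsto (fun k => μ k / ξ k) atTop (nhds 0)) :
    ∀ δ : ℝ, 0 < δ →
      ENNReal.ofReal (μ (Ncrit ξ δ) / ξ (Ncrit ξ δ)) ≤ RoptAll w μ ξ δ := by
  intro δ hδ
  set n := Ncrit ξ δ with hn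
  have hS : {N : ℕ | 1 / δ ≤ ξ N}.Nonempty := by
    obtain ⟨k, hk⟩ := (hξtop.eventually_ge_atTop (1 / δ)).exists
    exact ⟨k, hk⟩
  have hmem : 1 / δ ≤ ξ n := Nat.sInf_mem hS
  have hξpos : 0 < ξ n := lt_of_lt_of_le (by positivity) hmem
  have hμpos : 0 < μ n := lt_of_lt_of_le hμ0 (hμmono (Nat.zero_le n))
  set c := (ξ n)⁻¹ with hc
  have hcpos : 0 < c := inv_pos.mpr hξpos
  have hcδ : c ≤ δ := by
    rw [hc, inv_eq_one_div]
    rw [div_le_iff₀ hξpos]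
    have := (div_le_iff₀ hδ).mp hmem
    nlinarith
  have hinner : ∀ (d : ℝ) (k : ℕ), ⟪d • w n, w k⟫ = if n = k then d else 0 := by
    intro d k
    rw [real_inner_smul_left, orthonormal_iff_ite.mp hw_on n k]
    split <;> simp
  have hMem : ∀ d : ℝ, MemW w ξ (d • w n) := by
    intro d
    apply summable_of_ne_finset_zero (s := {n})
    intro k hk
    have : n ≠ k := fun h => hk (by simp [h])
    simp [hinner, this]
  have htsum : ∀ d : ℝ, (∑' k, ξ k ^ 2 * ⟪d • w n, w k⟫ ^ 2) = ξ n ^ 2 * d ^ 2 := by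
    intro d
    rw [tsum_eq_single n]
    · simp [hinner]
    · intro b hb
      have : n ≠ b := fun h => hb h.symm
      simp [hinner, this]
  have hnormW : ∀ d : ℝ, normW w ξ (d • w n) = |ξ n * d| := by
    intro d
    rw [normW, htsum, ← mul_pow, Real.sqrt_sq_eq_abs]
  have hopA : ∀ d : ℝ, opA w μ (d • w n) = (μ n * d) • w n := by
    intro d
    rw [opA, tsum_eq_single n]
    · rw [hinner]; simp
    · intro b hb
      have : n ≠ b := fun h => hb h.symm
      simp [hinner, this]
  have hwnorm : ‖w n‖ = 1 := hw_on.1 n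
  set a : H := (μ n * c) • w n with hadef
  have ha : ‖a‖ = μ n * c := by
    rw [hadef, norm_smul, hwnorm, mul_one, Real.norm_eq_abs, abs_of_pos (by positivity)]
  have hfd : ∀ d : ℝ, |d| ≤ δ → ‖d • w n - 0‖ ≤ δ := by
    intro d hd
    rw [sub_zero, norm_smul, hwnorm, mul_one, Real.norm_eq_abs]; exact hd
  have hmemW1 : ∀ d : ℝ, |d| = c → MemW w ξ (d • w n) ∧ normW w ξ (d • w n) ≤ 1 := by
    intro d hd
    refine ⟨hMem d, ?_⟩
    rw [hnormW, abs_mul, abs_of_pos hξpos, hd, hc, mul_inv_cancel₀ (ne_of_gt hξpos)]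
  rw [RoptAll]
  refine le_iInf fun N => ?_
  rw [Ropt]
  refine le_iInf fun G => le_iInf fun _ => le_iInf fun Ψ => ?_
  set y := Ψ (G 0) with hy
  have key : ∀ d : ℝ, |d| = c →
      ENNReal.ofReal ‖opA w μ (d • w n) - y‖ ≤ recErr w μ ξ δ G Ψ := by
    intro d hd
    rw [recErr]
    refine le_iSup₂_of_le (d • w n) (hmemW1 d hd) ?_
    refine le_iSup₂_of_le 0 (hfd d (hd ▸ hcδ)) le_rfl
  have h1 := key c (abs_of_pos hcpos)
  have h2 := key (-c) (by rw [abs_neg]; exact abs_of_pos hcpos)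
  rw [hopA] at h1
  rw [hopA] at h2
  have hμc : μ n / ξ n = μ n * c := by rw [hc, div_eq_mul_inv]
  rw [hμc]
  have hneg : (μ n * -c) • w n = -a := by rw [hadef, ← neg_smul]; ring_nf
  rw [hneg] at h2
  by_cases hcase : μ n * c ≤ ‖a - y‖
  · exact le_trans (ENNReal.ofReal_le_ofReal hcase) h1
  · push_neg at hcase
    have htri : ‖a - y‖ + ‖-a - y‖ ≥ ‖(a - y) - (-a - y)‖ := norm_sub_le _ _
    have hsum : (a - y) - (-a - y) = (2 : ℝ) • a := by
      rw [two_smul]; abel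
    rw [hsum, norm_smul] at htri
    simp only [Real.norm_ofNat] at htri
    have : μ n * c ≤ ‖-a - y‖ := by
      rw [ha] at htri; nlinarith
    exact le_trans (ENNReal.ofReal_le_ofReal this) h2
end
end

section
/- Exact error of the truncation method: for any δ > 0 and any N ≥ 1, the worst-case recovery error of the truncation method satisfies ε_δ(A,W,G̃_N,Ψ̃_N)_H = ( sup_{k ≥ N} μ_k²/ξ_k² + δ² μ_{N−1}² )^{1/2} (the supremum over k ≥ N is attained since μ_k/ξ_k → 0). -/
noncomputable section

open Filter
open scoped ENNReal RealInnerProductSpace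

variable {H : Type*} [NormedAddCommGroup H] [InnerProductSpace ℝ H] [CompleteSpace H]

/-- The information map of the truncation method: the first `N` Fourier coefficients. -/
def Gtrunc (w : ℕ → H) (N : ℕ) (f : H) : Fin N → ℝ := fun k => ⟪f, w k⟫

/-- The recovery algorithm of the truncation method. -/
def Psitrunc (w : ℕ → H) (μ : ℕ → ℝ) (N : ℕ) (x : Fin N → ℝ) : H :=
  ∑ k : Fin N, (μ k * x k) • w k

/-! By Parseval, the squared error is the sum of the squares of its coefficients, which are
`μ_k ⟪f - fδ, w_k⟫` for `k < N` and `μ_k ⟪f, w_k⟫` for `k ≥ N`. Monotonicity of `μ` and Bessel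
bound the first part by `δ² μ_{N-1}²`; writing `μ_k = (μ_k / ξ_k) ξ_k` bounds the second part by
`S ‖f‖_W²`, where `S = max_{k ≥ N} (μ_k / ξ_k)²`. Both bounds are attained together by
`f = w_m / ξ_m` and `fδ = f - δ w_{N-1}`, where `m ≥ N` realises the maximum `S`. -/

lemma exists_forall_le_of_tendsto_zero {a : ℕ → ℝ} (ha : Tendsto a atTop (nhds 0))
    {n : ℕ} (hn : 0 < a n) : ∃ j, ∀ i, a i ≤ a j :=
  continuous_of_discreteTopology.exists_forall_ge' n <| by
    rw [cocompact_eq_cofinite, Nat.cofinite_eq_atTop]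
    exact ha.eventually (ge_mem_nhds hn)

section

variable {ι : Type*} {w : ι → H}

lemma Orthonormal.hasSum_inner_sq (hw : Orthonormal ℝ w)
    (hdense : Dense (Submodule.span ℝ (Set.range w) : Set H)) (x : H) :
    HasSum (fun k => ⟪x, w k⟫ ^ 2) (‖x‖ ^ 2) := by
  have hspan := (Submodule.dense_iff_topologicalClosure_eq_top.mp hdense).ge
  simpa [HilbertBasis.coe_mk, real_inner_comm, sq, real_inner_self_eq_norm_sq] using
    (HilbertBasis.mk hw hspan).hasSum_inner_mul_inner x x

lemma Orthonormal.inner_tsum_smul (hw : Orthonormal ℝ w) {c : ι → ℝ}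
    (hc : Summable fun k => c k ^ 2) (j : ι) : ⟪∑' k, c k • w k, w j⟫ = c j := by
  classical
  have hs : Summable fun k => c k • w k := by
    simpa [LinearIsometry.toSpanSingleton_apply] using
      (hw.orthogonalFamily.summable_iff_norm_sq_summable c).mpr (by simpa using hc)
  have := hs.hasSum.mapL (innerSL ℝ (w j))
  simp only [innerSL_apply_apply, real_inner_smul_right, orthonormal_iff_ite.mp hw] at this
  rw [real_inner_comm, this.unique (hasSum_single j fun k hk => by simp [Ne.symm hk])]
  simp

end

omit [CompleteSpace H] in
lemma recErr_eq_ofReal_sqrt {w : ℕ → H} {μ ξ : ℕ → ℝ} {δ T : ℝ} {N : ℕ}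
    {G : H → Fin N → ℝ} {Ψ : (Fin N → ℝ) → H}
    (hle : ∀ f fδ, MemW w ξ f → normW w ξ f ≤ 1 → ‖f - fδ‖ ≤ δ →
      ‖opA w μ f - Ψ (G fδ)‖ ^ 2 ≤ T)
    (hge : ∃ f fδ, MemW w ξ f ∧ normW w ξ f ≤ 1 ∧ ‖f - fδ‖ ≤ δ ∧
      T ≤ ‖opA w μ f - Ψ (G fδ)‖ ^ 2) :
    recErr w μ ξ δ G Ψ = ENNReal.ofReal √T := by
  apply le_antisymm
  · refine iSup₂_le fun f hf => iSup₂_le fun fδ hfδ => ENNReal.ofReal_le_ofReal ?_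
    exact Real.le_sqrt_of_sq_le (hle f fδ hf.1 hf.2 hfδ)
  · obtain ⟨f, fδ, hf, hf1, hfδ, hT⟩ := hge
    refine le_iSup₂_of_le f ⟨hf, hf1⟩ (le_iSup₂_of_le fδ hfδ (ENNReal.ofReal_le_ofReal ?_))
    exact (Real.sqrt_le_left (norm_nonneg _)).mpr hT

def truncError (w : ℕ → H) (μ : ℕ → ℝ) (N : ℕ) (f fδ : H) : H :=
  opA w μ f - Psitrunc w μ N (Gtrunc w N fδ)

section

variable {w : ℕ → H} {μ ξ : ℕ → ℝ} {N : ℕ}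

omit [CompleteSpace H] in
lemma summable_sq_mul_inner_of_memW (hξ : ∀ k, ξ k ≠ 0) {C : ℝ}
    (hC : ∀ k, (μ k / ξ k) ^ 2 ≤ C) {f : H} (hf : MemW w ξ f) :
    Summable fun k => (μ k * ⟪f, w k⟫) ^ 2 := by
  refine (hf.mul_left C).of_nonneg_of_le (fun k => sq_nonneg _) fun k => ?_
  calc (μ k * ⟪f, w k⟫) ^ 2 = (μ k / ξ k) ^ 2 * (ξ k ^ 2 * ⟪f, w k⟫ ^ 2) := by
        field_simp [hξ k]
    _ ≤ C * (ξ k ^ 2 * ⟪f, w k⟫ ^ 2) := by gcongr; exact hC k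

omit [CompleteSpace H] in
lemma inner_psitrunc_gtrunc (hw : Orthonormal ℝ w) (g : H) (j : ℕ) :
    ⟪Psitrunc w μ N (Gtrunc w N g), w j⟫ = if j < N then μ j * ⟪g, w j⟫ else 0 := by
  simp only [Psitrunc, Gtrunc, sum_inner, real_inner_smul_left, orthonormal_iff_ite.mp hw,
    mul_ite, mul_one, mul_zero]
  rw [Fin.sum_univ_eq_sum_range (fun k => if k = j then μ k * ⟪g, w k⟫ else 0) N]
  simp [Finset.sum_ite_eq']

variable {f fδ : H}

lemma inner_truncError_of_lt (hw : Orthonormal ℝ w) (hA : Summable fun k => (μ k * ⟪f, w k⟫) ^ 2)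
    {j : ℕ} (hj : j < N) :
    ⟪truncError w μ N f fδ, w j⟫ = μ j * ⟪f - fδ, w j⟫ := by
  rw [truncError, inner_sub_left, opA, hw.inner_tsum_smul hA, inner_psitrunc_gtrunc hw,
    if_pos hj, inner_sub_left, mul_sub]

lemma inner_truncError_of_le (hw : Orthonormal ℝ w) (hA : Summable fun k => (μ k * ⟪f, w k⟫) ^ 2)
    {j : ℕ} (hj : N ≤ j) :
    ⟪truncError w μ N f fδ, w j⟫ = μ j * ⟪f, w j⟫ := by
  rw [truncError, inner_sub_left, opA, hw.inner_tsum_smul hA, inner_psitrunc_gtrunc hw,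
    if_neg hj.not_gt, sub_zero]

lemma sq_inner_truncError_le (hw : Orthonormal ℝ w) (hA : Summable fun k => (μ k * ⟪f, w k⟫) ^ 2)
    (hμ0 : 0 ≤ μ 0) (hμ : Monotone μ) (hξ : ∀ k, ξ k ≠ 0) {S : ℝ}
    (hS : ∀ k, N ≤ k → (μ k / ξ k) ^ 2 ≤ S) (j : ℕ) :
    ⟪truncError w μ N f fδ, w j⟫ ^ 2 ≤
      μ (N - 1) ^ 2 * ⟪f - fδ, w j⟫ ^ 2 + S * (ξ j ^ 2 * ⟪f, w j⟫ ^ 2) := by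
  rcases lt_or_ge j N with hj | hj
  · have hS0 : 0 ≤ S := (sq_nonneg _).trans (hS N le_rfl)
    have hμj : μ j ^ 2 ≤ μ (N - 1) ^ 2 :=
      pow_le_pow_left₀ (hμ0.trans (hμ j.zero_le)) (hμ (by omega)) 2
    rw [inner_truncError_of_lt hw hA hj, mul_pow]
    nlinarith [sq_nonneg ⟪f - fδ, w j⟫, sq_nonneg (ξ j * ⟪f, w j⟫)]
  · have hj' : (μ j * ⟪f, w j⟫) ^ 2 = (μ j / ξ j) ^ 2 * (ξ j ^ 2 * ⟪f, w j⟫ ^ 2) := by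
      field_simp [hξ j]
    rw [inner_truncError_of_le hw hA hj, hj']
    nlinarith [hS j hj, sq_nonneg (ξ j * ⟪f, w j⟫), sq_nonneg (μ (N - 1) * ⟪f - fδ, w j⟫)]

lemma norm_truncError_sq_le (hw : Orthonormal ℝ w)
    (hdense : Dense (Submodule.span ℝ (Set.range w) : Set H)) {C : ℝ}
    (hC : ∀ k, (μ k / ξ k) ^ 2 ≤ C) (hμ0 : 0 ≤ μ 0) (hμ : Monotone μ)
    (hξ : ∀ k, ξ k ≠ 0) {S : ℝ} (hS : ∀ k, N ≤ k → (μ k / ξ k) ^ 2 ≤ S)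
    (hf : MemW w ξ f) (hf1 : normW w ξ f ≤ 1) {δ : ℝ} (hfδ : ‖f - fδ‖ ≤ δ) :
    ‖truncError w μ N f fδ‖ ^ 2 ≤ S + δ ^ 2 * μ (N - 1) ^ 2 := by
  have hS0 : 0 ≤ S := (sq_nonneg _).trans (hS N le_rfl)
  have hW : ∑' k, ξ k ^ 2 * ⟪f, w k⟫ ^ 2 ≤ 1 := Real.sqrt_le_one.mp hf1
  have hA := summable_sq_mul_inner_of_memW hξ hC hf
  have hbound := hasSum_le (sq_inner_truncError_le hw hA hμ0 hμ hξ hS)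
    (hw.hasSum_inner_sq hdense _)
    (((hw.hasSum_inner_sq hdense (f - fδ)).mul_left _).add (hf.hasSum.mul_left S))
  have hδ : ‖f - fδ‖ ^ 2 ≤ δ ^ 2 := pow_le_pow_left₀ (norm_nonneg _) hfδ 2
  nlinarith [sq_nonneg (μ (N - 1))]

omit [CompleteSpace H] in
lemma hasSum_weight_sq_inner_inv_smul (hw : Orthonormal ℝ w) {m : ℕ} (hξ : ξ m ≠ 0) :
    HasSum (fun k => ξ k ^ 2 * ⟪(ξ m)⁻¹ • w m, w k⟫ ^ 2) 1 := by
  convert hasSum_single (f := fun k => ξ k ^ 2 * ⟪(ξ m)⁻¹ • w m, w k⟫ ^ 2) m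
    (fun k hk => by simp [real_inner_smul_left, hw.inner_eq_zero (Ne.symm hk)]) using 1
  simp [real_inner_smul_left, hw.1 m, hξ]

lemma exists_sq_add_le_norm_truncError_sq (hw : Orthonormal ℝ w)
    (hdense : Dense (Submodule.span ℝ (Set.range w) : Set H)) {C : ℝ}
    (hC : ∀ k, (μ k / ξ k) ^ 2 ≤ C) (hξ : ∀ k, ξ k ≠ 0) (hN : 0 < N) {m : ℕ} (hm : N ≤ m)
    {δ : ℝ} (hδ : 0 ≤ δ) :
    ∃ f fδ : H, MemW w ξ f ∧ normW w ξ f ≤ 1 ∧ ‖f - fδ‖ ≤ δ ∧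
      (μ m / ξ m) ^ 2 + δ ^ 2 * μ (N - 1) ^ 2 ≤
        ‖truncError w μ N f fδ‖ ^ 2 := by
  set f₀ := (ξ m)⁻¹ • w m
  have hf₀ := hasSum_weight_sq_inner_inv_smul hw (hξ m)
  have hA := summable_sq_mul_inner_of_memW hξ hC hf₀.summable
  refine ⟨f₀, f₀ - δ • w (N - 1), hf₀.summable, by rw [normW, hf₀.tsum_eq, Real.sqrt_one], ?_, ?_⟩
  · rw [sub_sub_cancel, norm_smul, hw.1, mul_one, Real.norm_of_nonneg hδ]
  · have hpair := sum_le_hasSum {m, N - 1} (fun _ _ => sq_nonneg _) (hw.hasSum_inner_sq hdense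
      (truncError w μ N f₀ (f₀ - δ • w (N - 1))))
    rw [Finset.sum_pair (by omega), inner_truncError_of_le hw hA hm,
      inner_truncError_of_lt hw hA (by omega), sub_sub_cancel] at hpair
    simpa [f₀, real_inner_smul_left, real_inner_self_eq_norm_sq, hw.1, div_eq_mul_inv,
      mul_pow, mul_comm] using hpair

end

theorem stmt2_general
    (w : ℕ → H) (hw_on : Orthonormal ℝ w)
    (hw_dense : Dense (Submodule.span ℝ (Set.range w) : Set H))
    (μ ξ : ℕ → ℝ)
    (hμ0 : 0 < μ 0) (hμmono : Monotone μ)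
    (hξ0 : 0 < ξ 0) (hξmono : Monotone ξ)
    (hratio : Tendsto (fun k => μ k / ξ k) atTop (nhds 0)) :
    ∀ δ : ℝ, 0 < δ → ∀ N : ℕ, 1 ≤ N →
      recErr w μ ξ δ (Gtrunc w N) (Psitrunc w μ N) =
        ENNReal.ofReal (Real.sqrt
          ((⨆ j : ℕ, (μ (N + j) / ξ (N + j)) ^ 2) + δ ^ 2 * μ (N - 1) ^ 2)) := by
  intro δ hδ N hN
  have hξ : ∀ k, ξ k ≠ 0 := fun k => (hξ0.trans_le (hξmono k.zero_le)).ne'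
  have hratio_sq : Tendsto (fun k => (μ k / ξ k) ^ 2) atTop (nhds 0) := by
    simpa using hratio.pow 2
  obtain ⟨C, hC⟩ := hratio_sq.bddAbove_range
  replace hC : ∀ k, (μ k / ξ k) ^ 2 ≤ C := fun k => hC ⟨k, rfl⟩
  have hμN : 0 < μ N / ξ N :=
    div_pos (hμ0.trans_le (hμmono N.zero_le)) (hξ0.trans_le (hξmono N.zero_le))
  have hshift : Tendsto (fun i => N + i) atTop atTop :=
    tendsto_atTop_mono (fun i => Nat.le_add_left i N) tendsto_id
  obtain ⟨j, hj⟩ : ∃ j, ∀ i, (μ (N + i) / ξ (N + i)) ^ 2 ≤ (μ (N + j) / ξ (N + j)) ^ 2 :=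
    exists_forall_le_of_tendsto_zero (n := 0) (hratio_sq.comp hshift) (pow_pos hμN 2)
  have hsup : (⨆ i, (μ (N + i) / ξ (N + i)) ^ 2) = (μ (N + j) / ξ (N + j)) ^ 2 :=
    IsGreatest.csSup_eq ⟨⟨j, rfl⟩, Set.forall_mem_range.2 hj⟩
  have hS : ∀ k, N ≤ k → (μ k / ξ k) ^ 2 ≤ (μ (N + j) / ξ (N + j)) ^ 2 := fun k hk => by
    simpa [Nat.add_sub_of_le hk] using hj (k - N)
  rw [hsup]
  exact recErr_eq_ofReal_sqrt
    (fun f fδ hf hf1 hfδ => norm_truncError_sq_le hw_on hw_dense hC hμ0.le hμmono hξ hS hf hf1 hfδ)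
    (exists_sq_add_le_norm_truncError_sq hw_on hw_dense hC hξ hN (Nat.le_add_right N j) hδ.le)

/-- exact worst case error of the truncation method. -/
theorem stmt2
    (w : ℕ → H) (hw_on : Orthonormal ℝ w)
    (hw_dense : Dense (Submodule.span ℝ (Set.range w) : Set H))
    (μ ξ : ℕ → ℝ)
    (hμ0 : 0 < μ 0) (hμmono : Monotone μ) (hμtop : Tendsto μ atTop atTop)
    (hξ0 : 0 < ξ 0) (hξmono : Monotone ξ) (hξtop : Tendsto ξ atTop atTop)
    (hratio : Tendsto (fun k => μ k / ξ k) atTop (nhds 0)) :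
    ∀ δ : ℝ, 0 < δ → ∀ N : ℕ, 1 ≤ N →
      recErr w μ ξ δ (Gtrunc w N) (Psitrunc w μ N) =
        ENNReal.ofReal (Real.sqrt
          ((⨆ j : ℕ, (μ (N + j) / ξ (N + j)) ^ 2) + δ ^ 2 * μ (N - 1) ^ 2)) :=
  stmt2_general w hw_on hw_dense μ ξ hμ0 hμmono hξ0 hξmono hratio
end
end

section
/- Truncation error at the level N_δ: for any δ > 0 with δ < 1/ξ_0 (so that N_δ ≥ 1), inf_N ε_δ(A,W,G̃_N,Ψ̃_N)_H ≤ ε_δ(A,W,G̃_{N_δ},Ψ̃_{N_δ})_H < ( μ_{N_δ−1}²/ξ_{N_δ−1}² + sup_{k ≥ N_δ} μ_k²/ξ_k² )^{1/2}. -/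
/-!
Along the orthonormal family, `A f - Ψ̃_N (G̃_N f^δ)` has coefficients `μ_k ⟨f - f^δ, w_k⟩` for
`k < N` and `μ_k ⟨f, w_k⟩` for `k ≥ N`. Bessel's inequality and the monotonicity of `μ` bound the
first block by `μ_{N-1}² δ²`; writing `μ_k = (μ_k / ξ_k) ξ_k` bounds the second by
`sup_{k ≥ N} (μ_k / ξ_k)² ‖f‖_W²`. At `N = N_δ` the minimality of `N_δ` gives `δ ξ_{N_δ-1} < 1`,
so the first bound is strictly below `(μ_{N_δ-1} / ξ_{N_δ-1})²`.
-/

noncomputable section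

open Filter
open scoped ENNReal RealInnerProductSpace

variable {H : Type*} [NormedAddCommGroup H] [InnerProductSpace ℝ H] [CompleteSpace H]

namespace Orthonormal

variable {ι E : Type*} [NormedAddCommGroup E] [InnerProductSpace ℝ E] {v : ι → E}

theorem hasSum_sq_of_hasSum_smul (hv : Orthonormal ℝ v) {a : ι → ℝ} {g : E}
    (hg : HasSum (fun i => a i • v i) g) : HasSum (fun i => a i ^ 2) (‖g‖ ^ 2) := by
  have hpartial (s : Finset ι) : ‖∑ i ∈ s, a i • v i‖ ^ 2 = ∑ i ∈ s, a i ^ 2 := by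
    rw [← real_inner_self_eq_norm_sq, hv.inner_sum]
    simp [sq]
  have := ((continuous_norm.tendsto g).pow 2).comp hg
  simpa only [HasSum, Function.comp_def, hpartial] using this

theorem summable_smul_of_summable_sq [CompleteSpace E] (hv : Orthonormal ℝ v) {a : ι → ℝ}
    (ha : Summable fun i => a i ^ 2) : Summable fun i => a i • v i := by
  simpa using (hv.orthogonalFamily.summable_iff_norm_sq_summable a).2 (by simpa using ha)

theorem sum_sq_mul_inner_le (hv : Orthonormal ℝ v) (s : Finset ι) {c : ι → ℝ} {C : ℝ}
    (hC : 0 ≤ C) (hc : ∀ i ∈ s, c i ^ 2 ≤ C) (x : E) :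
    ∑ i ∈ s, (c i * ⟪x, v i⟫) ^ 2 ≤ C * ‖x‖ ^ 2 := by
  have hbessel : ∑ i ∈ s, ⟪x, v i⟫ ^ 2 ≤ ‖x‖ ^ 2 := by
    simpa [real_inner_comm] using hv.sum_inner_products_le (s := s) (x := x)
  calc ∑ i ∈ s, (c i * ⟪x, v i⟫) ^ 2
      ≤ ∑ i ∈ s, C * ⟪x, v i⟫ ^ 2 := by
        gcongr with i hi
        rw [mul_pow]
        exact mul_le_mul_of_nonneg_right (hc i hi) (sq_nonneg _)
    _ ≤ C * ‖x‖ ^ 2 := by rw [← Finset.mul_sum]; gcongr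

end Orthonormal

theorem hasSum_ite_lt {M : Type*} [AddCommMonoid M] [TopologicalSpace M] (N : ℕ) (g : ℕ → M) :
    HasSum (fun k => if k < N then g k else 0) (∑ k ∈ Finset.range N, g k) := by
  have h := hasSum_sum_of_ne_finset_zero (L := SummationFilter.unconditional ℕ)
    (s := Finset.range N) (f := fun k => if k < N then g k else 0)
    fun k hk => if_neg (by simpa using hk)
  rwa [Finset.sum_congr rfl fun k hk => if_pos (Finset.mem_range.1 hk)] at h

theorem sq_mul_le_of_sq_div_le {m s S : ℝ} (hs : s ≠ 0) (h : (m / s) ^ 2 ≤ S) (x : ℝ) :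
    (m * x) ^ 2 ≤ S * (s ^ 2 * x ^ 2) :=
  calc (m * x) ^ 2 = (m / s) ^ 2 * (s ^ 2 * x ^ 2) := by field_simp
    _ ≤ S * (s ^ 2 * x ^ 2) := by gcongr

theorem apply_Ncrit_sub_one_lt {ξ : ℕ → ℝ} {δ : ℝ} (h : ξ 0 < 1 / δ) :
    ξ (Ncrit ξ δ - 1) < 1 / δ := by
  rcases Nat.eq_zero_or_pos (Ncrit ξ δ) with h0 | hpos
  · rwa [h0]
  · exact lt_of_not_ge (Nat.notMem_of_lt_sInf (Nat.sub_lt hpos one_pos))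

section Truncation

variable {w : ℕ → H} {μ ξ : ℕ → ℝ}

theorem hasSum_opA_sub_Psitrunc (hw : Orthonormal ℝ w) {f : H}
    (hf : Summable fun k => (μ k * ⟪f, w k⟫) ^ 2) (N : ℕ) (fδ : H) :
    HasSum (fun k => (if k < N then μ k * ⟪f - fδ, w k⟫ else μ k * ⟪f, w k⟫) • w k)
      (opA w μ f - Psitrunc w μ N (Gtrunc w N fδ)) := by
  have hA : HasSum (fun k => (μ k * ⟪f, w k⟫) • w k) (opA w μ f) :=
    (hw.summable_smul_of_summable_sq hf).hasSum
  have hΨ :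
      Psitrunc w μ N (Gtrunc w N fδ) = ∑ k ∈ Finset.range N, (μ k * ⟪fδ, w k⟫) • w k :=
    Fin.sum_univ_eq_sum_range (fun k => (μ k * ⟪fδ, w k⟫) • w k) N
  rw [hΨ]
  refine (hA.sub (hasSum_ite_lt N _)).congr_fun fun k => ?_
  split_ifs <;> simp [inner_sub_left, mul_sub, sub_smul]

theorem norm_opA_sub_Psitrunc_sq_le (hw : Orthonormal ℝ w) (hμ : ∀ k, 0 ≤ μ k)
    (hμmono : Monotone μ) (hξ : ∀ k, ξ k ≠ 0) {N : ℕ} {S : ℝ}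
    (hS : ∀ k, N ≤ k → (μ k / ξ k) ^ 2 ≤ S) {f : H} (hf : MemW w ξ f) (fδ : H) :
    ‖opA w μ f - Psitrunc w μ N (Gtrunc w N fδ)‖ ^ 2 ≤
      μ (N - 1) ^ 2 * ‖f - fδ‖ ^ 2 + S * normW w ξ f ^ 2 := by
  have htail : ∀ k, N ≤ k → (μ k * ⟪f, w k⟫) ^ 2 ≤ S * (ξ k ^ 2 * ⟪f, w k⟫ ^ 2) :=
    fun k hk => sq_mul_le_of_sq_div_le (hξ k) (hS k hk) _
  have hsum : Summable fun k => (μ k * ⟪f, w k⟫) ^ 2 :=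
    (summable_nat_add_iff N).1 <| Summable.of_nonneg_of_le (fun _ => sq_nonneg _)
      (fun k => htail _ (by omega)) (((summable_nat_add_iff N).2 hf).mul_left S)
  have hnorm := hw.hasSum_sq_of_hasSum_smul (hasSum_opA_sub_Psitrunc hw hsum N fδ)
  have hsplit : ‖opA w μ f - Psitrunc w μ N (Gtrunc w N fδ)‖ ^ 2 ≤
      ∑ k ∈ Finset.range N, (μ k * ⟪f - fδ, w k⟫) ^ 2 + S * ∑' k, ξ k ^ 2 * ⟪f, w k⟫ ^ 2 := by
    refine hasSum_le (fun k => ?_) hnorm ((hasSum_ite_lt N _).add (hf.hasSum.mul_left S))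
    split_ifs with hk
    · exact le_add_of_nonneg_right
        (mul_nonneg ((sq_nonneg _).trans (hS N le_rfl)) (by positivity))
    · simpa using htail k (by omega)
  have hhead :
      ∑ k ∈ Finset.range N, (μ k * ⟪f - fδ, w k⟫) ^ 2 ≤ μ (N - 1) ^ 2 * ‖f - fδ‖ ^ 2 :=
    hw.sum_sq_mul_inner_le _ (sq_nonneg _) (fun k hk =>
      pow_le_pow_left₀ (hμ k) (hμmono (by simp only [Finset.mem_range] at hk; omega)) 2) _
  rw [normW, Real.sq_sqrt (tsum_nonneg fun k => by positivity)]
  linarith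

theorem recErr_Gtrunc_Psitrunc_le (hw : Orthonormal ℝ w) (hμ : ∀ k, 0 ≤ μ k)
    (hμmono : Monotone μ) (hξ : ∀ k, ξ k ≠ 0) {N : ℕ} {S : ℝ}
    (hS : ∀ k, N ≤ k → (μ k / ξ k) ^ 2 ≤ S) (δ : ℝ) :
    recErr w μ ξ δ (Gtrunc w N) (Psitrunc w μ N) ≤
      ENNReal.ofReal √(μ (N - 1) ^ 2 * δ ^ 2 + S) := by
  refine iSup₂_le fun f hf => iSup₂_le fun fδ hfδ => ENNReal.ofReal_le_ofReal ?_
  have hS0 : 0 ≤ S := (sq_nonneg _).trans (hS N le_rfl)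
  refine Real.le_sqrt_of_sq_le ?_
  calc ‖opA w μ f - Psitrunc w μ N (Gtrunc w N fδ)‖ ^ 2
      ≤ μ (N - 1) ^ 2 * ‖f - fδ‖ ^ 2 + S * normW w ξ f ^ 2 :=
        norm_opA_sub_Psitrunc_sq_le hw hμ hμmono hξ hS hf.1 fδ
    _ ≤ μ (N - 1) ^ 2 * δ ^ 2 + S * 1 ^ 2 := by
        gcongr
        exacts [Real.sqrt_nonneg _, hf.2]
    _ = μ (N - 1) ^ 2 * δ ^ 2 + S := by ring

end Truncation

theorem stmt3_general
    (w : ℕ → H) (hw_on : Orthonormal ℝ w)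
    (μ ξ : ℕ → ℝ)
    (hμ0 : 0 < μ 0) (hμmono : Monotone μ)
    (hξ0 : 0 < ξ 0) (hξmono : Monotone ξ)
    (hratio : Tendsto (fun k => μ k / ξ k) atTop (nhds 0)) :
    ∀ δ : ℝ, 0 < δ → δ < 1 / ξ 0 →
      (⨅ N : ℕ, recErr w μ ξ δ (Gtrunc w N) (Psitrunc w μ N)) ≤
          recErr w μ ξ δ (Gtrunc w (Ncrit ξ δ)) (Psitrunc w μ (Ncrit ξ δ)) ∧
        recErr w μ ξ δ (Gtrunc w (Ncrit ξ δ)) (Psitrunc w μ (Ncrit ξ δ)) <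
          ENNReal.ofReal (Real.sqrt
            ((μ (Ncrit ξ δ - 1) / ξ (Ncrit ξ δ - 1)) ^ 2 +
              ⨆ j : ℕ, (μ (Ncrit ξ δ + j) / ξ (Ncrit ξ δ + j)) ^ 2)) := by
  intro δ hδ hδξ
  set N := Ncrit ξ δ
  have hξpos : ∀ k, 0 < ξ k := fun k => hξ0.trans_le (hξmono k.zero_le)
  have hμpos : ∀ k, 0 < μ k := fun k => hμ0.trans_le (hμmono k.zero_le)
  have hbdd : BddAbove (Set.range fun j => (μ (N + j) / ξ (N + j)) ^ 2) :=
    (hratio.pow 2).bddAbove_range.mono <| by rintro _ ⟨j, rfl⟩; exact ⟨N + j, rfl⟩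
  have hS : ∀ k, N ≤ k → (μ k / ξ k) ^ 2 ≤ ⨆ j, (μ (N + j) / ξ (N + j)) ^ 2 := by
    intro k hk
    obtain ⟨j, rfl⟩ := Nat.exists_eq_add_of_le hk
    exact le_ciSup hbdd j
  have hδN : δ < 1 / ξ (N - 1) :=
    (lt_one_div hδ (hξpos _)).2 (apply_Ncrit_sub_one_lt ((lt_one_div hδ hξ0).1 hδξ))
  have hkey : μ (N - 1) ^ 2 * δ ^ 2 < (μ (N - 1) / ξ (N - 1)) ^ 2 := by
    rw [← mul_pow, div_eq_mul_one_div]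
    exact pow_lt_pow_left₀ (mul_lt_mul_of_pos_left hδN (hμpos _))
      (mul_pos (hμpos _) hδ).le two_ne_zero
  refine ⟨iInf_le _ N, (recErr_Gtrunc_Psitrunc_le hw_on (fun k => (hμpos k).le) hμmono
    (fun k => (hξpos k).ne') hS δ).trans_lt ?_⟩
  rw [ENNReal.ofReal_lt_ofReal_iff_of_nonneg (Real.sqrt_nonneg _)]
  exact Real.sqrt_lt_sqrt (by nlinarith [(sq_nonneg _).trans (hS N le_rfl)]) (by linarith)

/-- truncation error at the level `N_δ`. -/
theorem stmt3
    (w : ℕ → H) (hw_on : Orthonormal ℝ w)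
    (hw_dense : Dense (Submodule.span ℝ (Set.range w) : Set H))
    (μ ξ : ℕ → ℝ)
    (hμ0 : 0 < μ 0) (hμmono : Monotone μ) (hμtop : Tendsto μ atTop atTop)
    (hξ0 : 0 < ξ 0) (hξmono : Monotone ξ) (hξtop : Tendsto ξ atTop atTop)
    (hratio : Tendsto (fun k => μ k / ξ k) atTop (nhds 0)) :
    ∀ δ : ℝ, 0 < δ → δ < 1 / ξ 0 →
      (⨅ N : ℕ, recErr w μ ξ δ (Gtrunc w N) (Psitrunc w μ N)) ≤
          recErr w μ ξ δ (Gtrunc w (Ncrit ξ δ)) (Psitrunc w μ (Ncrit ξ δ)) ∧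
        recErr w μ ξ δ (Gtrunc w (Ncrit ξ δ)) (Psitrunc w μ (Ncrit ξ δ)) <
          ENNReal.ofReal (Real.sqrt
            ((μ (Ncrit ξ δ - 1) / ξ (Ncrit ξ δ - 1)) ^ 2 +
              ⨆ j : ℕ, (μ (Ncrit ξ δ + j) / ξ (Ncrit ξ δ + j)) ^ 2)) :=
  stmt3_general w hw_on μ ξ hμ0 hμmono hξ0 hξmono hratio
end
end

section
/- No substantial gain from truncation with N above N_δ: assume the sequence {μ_k/ξ_k} is monotone nonincreasing with μ_k/ξ_k → 0, and let δ > 0 satisfy δ < 1/ξ_0 (so N_δ ≥ 1). Then for any N > N_δ, ε_δ(A,W,G̃_N,Ψ̃_N)_H ≥ (1/√2) · ε_δ(A,W,G̃_{N_δ},Ψ̃_{N_δ})_H ≥ (1/√2) · R_{N_δ,δ}(A,W)_H. -/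
noncomputable section

open Filter
open scoped ENNReal RealInnerProductSpace

variable {H : Type*} [NormedAddCommGroup H] [InnerProductSpace ℝ H] [CompleteSpace H]

/-!
Write `M = N_δ`. For `N > M` the data `f = 0`, `f^δ = δ w_{N-1}` already force
`ε_δ(G̃_N, Ψ̃_N) ≥ μ_{N-1} δ`. For truncation at `M`, the error `Af - Ψ̃_M(G̃_M f^δ)` has
coefficients `μ_k ⟨f - f^δ, w_k⟩` for `k < M` and `μ_k ⟨f, w_k⟩` for `k ≥ M`. Bessel's inequality
bounds the first block by `μ_{M-1} δ`; since `μ_k / ξ_k` is nonincreasing and `ξ_M ≥ 1/δ`, the tail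
is at most `μ_M / ξ_M ≤ μ_M δ`. Both bounds are `≤ μ_{N-1} δ`, so `ε_δ(G̃_M, Ψ̃_M) ≤ √2 μ_{N-1} δ`.
The comparison with `R_{M,δ}` holds because `G̃_M` is continuous.
-/

section OrthonormalSeries

variable {E ι : Type*} [NormedAddCommGroup E] [InnerProductSpace ℝ E] {v : ι → E}

lemma memℓp_two_of_summable_sq {c : ι → ℝ} (hc : Summable fun i => c i ^ 2) : Memℓp c 2 :=
  memℓp_gen <| by
    simpa only [ENNReal.toReal_ofNat, Real.rpow_two, Real.norm_eq_abs, sq_abs] using hc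

lemma Orthonormal.sum_sq_mul_inner_le_s8 (hv : Orthonormal ℝ v) {μ : ι → ℝ} {s : Finset ι} {m : ℝ}
    (hμ : ∀ i ∈ s, |μ i| ≤ m) (g : E) :
    ∑ i ∈ s, (μ i * ⟪g, v i⟫) ^ 2 ≤ m ^ 2 * ‖g‖ ^ 2 := by
  have hBessel : ∑ i ∈ s, ⟪g, v i⟫ ^ 2 ≤ ‖g‖ ^ 2 := by
    simpa [real_inner_comm, sq_abs] using hv.sum_inner_products_le (s := s) g
  calc ∑ i ∈ s, (μ i * ⟪g, v i⟫) ^ 2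
      ≤ ∑ i ∈ s, m ^ 2 * ⟪g, v i⟫ ^ 2 := by
        refine Finset.sum_le_sum fun i hi => ?_
        rw [mul_pow, ← sq_abs (μ i)]
        gcongr
        exact hμ i hi
    _ ≤ m ^ 2 * ‖g‖ ^ 2 := by
        rw [← Finset.mul_sum]
        gcongr

variable [CompleteSpace E]

lemma Orthonormal.summable_smul_of_summable_sq_s8 (hv : Orthonormal ℝ v) {c : ι → ℝ}
    (hc : Summable fun i => c i ^ 2) : Summable fun i => c i • v i :=
  hv.orthogonalFamily.summable_of_lp ⟨c, memℓp_two_of_summable_sq hc⟩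

lemma Orthonormal.norm_tsum_smul_sq (hv : Orthonormal ℝ v) {c : ι → ℝ}
    (hc : Summable fun i => c i ^ 2) : ‖∑' i, c i • v i‖ ^ 2 = ∑' i, c i ^ 2 := by
  let x : lp (fun _ : ι => ℝ) 2 := ⟨c, memℓp_two_of_summable_sq hc⟩
  have hx : hv.orthogonalFamily.linearIsometry x = ∑' i, c i • v i := rfl
  rw [← hx, LinearIsometry.norm_map, ← real_inner_self_eq_norm_sq, lp.inner_eq_tsum]
  simp [x, sq]

end OrthonormalSeries

section WeightedSequences

variable {μ ξ x : ℕ → ℝ}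
  (hμ : ∀ k, 0 ≤ μ k) (hξ : ∀ k, 0 < ξ k) (hanti : Antitone fun k => μ k / ξ k)
include hμ hξ hanti

lemma sq_mul_le_of_antitone_div {M k : ℕ} (hk : M ≤ k) :
    (μ k * x k) ^ 2 ≤ (μ M / ξ M) ^ 2 * (ξ k ^ 2 * x k ^ 2) :=
  calc (μ k * x k) ^ 2 = (μ k / ξ k) ^ 2 * (ξ k ^ 2 * x k ^ 2) := by field_simp [(hξ k).ne']
    _ ≤ (μ M / ξ M) ^ 2 * (ξ k ^ 2 * x k ^ 2) :=
        mul_le_mul_of_nonneg_right (pow_le_pow_left₀ (div_nonneg (hμ k) (hξ k).le) (hanti hk) 2)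
          (by positivity)

lemma summable_sq_mul_of_antitone_div (hx : Summable fun k => ξ k ^ 2 * x k ^ 2) :
    Summable fun k => (μ k * x k) ^ 2 :=
  (hx.mul_left _).of_nonneg_of_le (fun _ => sq_nonneg _)
    fun k => sq_mul_le_of_antitone_div hμ hξ hanti (Nat.zero_le k)

lemma tsum_sq_mul_nat_add_le (hx : Summable fun k => ξ k ^ 2 * x k ^ 2) (M : ℕ) :
    ∑' k, (μ (k + M) * x (k + M)) ^ 2 ≤ (μ M / ξ M) ^ 2 * ∑' k, ξ k ^ 2 * x k ^ 2 := by
  have hshift := (summable_nat_add_iff M).2 hx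
  calc ∑' k, (μ (k + M) * x (k + M)) ^ 2
      ≤ ∑' k, (μ M / ξ M) ^ 2 * (ξ (k + M) ^ 2 * x (k + M) ^ 2) :=
        ((summable_nat_add_iff M).2 (summable_sq_mul_of_antitone_div hμ hξ hanti hx)).tsum_le_tsum
          (fun k => sq_mul_le_of_antitone_div hμ hξ hanti (Nat.le_add_left M k))
          (hshift.mul_left _)
    _ ≤ (μ M / ξ M) ^ 2 * ∑' k, ξ k ^ 2 * x k ^ 2 := by
        rw [tsum_mul_left, ← hx.sum_add_tsum_nat_add M]
        gcongr
        exact le_add_of_nonneg_left (Finset.sum_nonneg fun k _ => by positivity)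

end WeightedSequences

section TruncationMethod

variable {E : Type*} [NormedAddCommGroup E] [InnerProductSpace ℝ E] {w : ℕ → E} {μ ξ : ℕ → ℝ}
  {δ : ℝ}

lemma Psitrunc_Gtrunc_eq_sum (w : ℕ → E) (μ : ℕ → ℝ) (N : ℕ) (g : E) :
    Psitrunc w μ N (Gtrunc w N g) = ∑ k ∈ Finset.range N, (μ k * ⟪g, w k⟫) • w k :=
  Fin.sum_univ_eq_sum_range (fun k => (μ k * ⟪g, w k⟫) • w k) N

lemma continuous_Gtrunc (w : ℕ → E) (N : ℕ) : Continuous (Gtrunc w N) :=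
  continuous_pi fun _ => continuous_id.inner continuous_const

lemma Ropt_le_recErr {N : ℕ} {G : E → Fin N → ℝ} (hG : Continuous G) (Ψ : (Fin N → ℝ) → E) :
    Ropt w μ ξ δ N ≤ recErr w μ ξ δ G Ψ :=
  iInf₂_le_of_le G hG (iInf_le _ Ψ)

lemma one_div_le_apply_Ncrit (hξ : Tendsto ξ atTop atTop) (δ : ℝ) : 1 / δ ≤ ξ (Ncrit ξ δ) :=
  Nat.sInf_mem (hξ.eventually_ge_atTop (1 / δ)).exists

lemma ofReal_mul_le_recErr_trunc (hw : Orthonormal ℝ w) (hδ : 0 ≤ δ) {k N : ℕ} (hk : k < N) :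
    ENNReal.ofReal (μ k * δ) ≤ recErr w μ ξ δ (Gtrunc w N) (Psitrunc w μ N) := by
  have hΨ : Psitrunc w μ N (Gtrunc w N (δ • w k)) = (μ k * δ) • w k := by
    rw [Psitrunc_Gtrunc_eq_sum, Finset.sum_eq_single_of_mem k (Finset.mem_range.2 hk)]
    · simp [real_inner_smul_left, hw.1 k]
    · intro j _ hjk
      simp [real_inner_smul_left, hw.2 (Ne.symm hjk)]
  have h0 : MemW w ξ 0 ∧ normW w ξ 0 ≤ 1 := by simp [MemW, normW, summable_zero]
  have hfδ : ‖(0 : E) - δ • w k‖ ≤ δ := by simp [norm_smul, hw.1 k, abs_of_nonneg hδ]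
  calc ENNReal.ofReal (μ k * δ)
      ≤ ENNReal.ofReal ‖opA w μ 0 - Psitrunc w μ N (Gtrunc w N (δ • w k))‖ := by
        refine ENNReal.ofReal_le_ofReal ?_
        simpa [opA, hΨ, norm_smul, hw.1 k] using le_abs_self (μ k * δ)
    _ ≤ recErr w μ ξ δ (Gtrunc w N) (Psitrunc w μ N) :=
        le_iSup₂_of_le (0 : E) h0 (le_iSup₂_of_le (δ • w k) hfδ le_rfl)

lemma hasSum_trunc_error [CompleteSpace E] (hw : Orthonormal ℝ w) (M : ℕ) {f : E}
    (hf : Summable fun k => (μ k * ⟪f, w k⟫) ^ 2) (fδ : E) :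
    HasSum (fun k => (μ k * ⟪if k < M then f - fδ else f, w k⟫) • w k)
      (opA w μ f - Psitrunc w μ M (Gtrunc w M fδ)) := by
  have hA : HasSum (fun k => (μ k * ⟪f, w k⟫) • w k) (opA w μ f) :=
    (hw.summable_smul_of_summable_sq_s8 hf).hasSum
  have hΨ : HasSum (fun k => (if k < M then μ k * ⟪fδ, w k⟫ else 0) • w k)
      (Psitrunc w μ M (Gtrunc w M fδ)) := by
    have hfin : HasSum (fun k => (if k < M then μ k * ⟪fδ, w k⟫ else 0) • w k)
        (∑ k ∈ Finset.range M, (if k < M then μ k * ⟪fδ, w k⟫ else 0) • w k) :=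
      hasSum_sum_of_ne_finset_zero fun k hk => by rw [if_neg (by simpa using hk), zero_smul]
    rw [Psitrunc_Gtrunc_eq_sum]
    convert hfin using 1
    exact Finset.sum_congr rfl fun k hk => by rw [if_pos (Finset.mem_range.1 hk)]
  convert hA.sub hΨ using 1
  funext k
  split_ifs <;> simp [inner_sub_left, mul_sub, sub_smul]

end TruncationMethod

section TruncationUpperBound

variable {E : Type*} [NormedAddCommGroup E] [InnerProductSpace ℝ E] [CompleteSpace E]
  {w : ℕ → E} {μ ξ : ℕ → ℝ} {δ : ℝ}
  (hw : Orthonormal ℝ w) (hμ : ∀ k, 0 ≤ μ k) (hμmono : Monotone μ) (hξ : ∀ k, 0 < ξ k)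
  (hanti : Antitone fun k => μ k / ξ k)
include hw hμ hμmono hξ hanti

lemma norm_trunc_error_sq_le (M : ℕ) {f fδ : E} (hf : MemW w ξ f) (hfW : normW w ξ f ≤ 1)
    (hfδ : ‖f - fδ‖ ≤ δ) :
    ‖opA w μ f - Psitrunc w μ M (Gtrunc w M fδ)‖ ^ 2 ≤ (μ (M - 1) * δ) ^ 2 + (μ M / ξ M) ^ 2 := by
  set e := fun k => μ k * ⟪if k < M then f - fδ else f, w k⟫
  have ha := summable_sq_mul_of_antitone_div hμ hξ hanti hf
  have htail : ∀ k, e (k + M) = μ (k + M) * ⟪f, w (k + M)⟫ := by simp [e]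
  have he : Summable fun k => e k ^ 2 :=
    (summable_nat_add_iff M).1 (by simpa only [htail] using (summable_nat_add_iff M).2 ha)
  rw [← (hasSum_trunc_error hw M ha fδ).tsum_eq, hw.norm_tsum_smul_sq he,
    ← he.sum_add_tsum_nat_add M]
  gcongr ?_ + ?_
  · calc ∑ k ∈ Finset.range M, e k ^ 2
        = ∑ k ∈ Finset.range M, (μ k * ⟪f - fδ, w k⟫) ^ 2 :=
          Finset.sum_congr rfl fun k hk => by simp [e, Finset.mem_range.1 hk]
      _ ≤ μ (M - 1) ^ 2 * ‖f - fδ‖ ^ 2 :=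
          hw.sum_sq_mul_inner_le_s8 (fun k hk => by
            rw [abs_of_nonneg (hμ k)]
            exact hμmono (by have := Finset.mem_range.1 hk; omega)) _
      _ ≤ (μ (M - 1) * δ) ^ 2 := by
          rw [mul_pow]
          gcongr
  · calc ∑' k, e (k + M) ^ 2
        = ∑' k, (μ (k + M) * ⟪f, w (k + M)⟫) ^ 2 := by simp only [htail]
      _ ≤ (μ M / ξ M) ^ 2 * ∑' k, ξ k ^ 2 * ⟪f, w k⟫ ^ 2 :=
          tsum_sq_mul_nat_add_le hμ hξ hanti hf M
      _ ≤ (μ M / ξ M) ^ 2 := by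
          refine mul_le_of_le_one_right (sq_nonneg _) ?_
          simpa [normW] using hfW

lemma recErr_trunc_le (M : ℕ) :
    recErr w μ ξ δ (Gtrunc w M) (Psitrunc w μ M) ≤
      ENNReal.ofReal √((μ (M - 1) * δ) ^ 2 + (μ M / ξ M) ^ 2) :=
  iSup₂_le fun _ hf => iSup₂_le fun _ hfδ => ENNReal.ofReal_le_ofReal <| Real.le_sqrt_of_sq_le <|
    norm_trunc_error_sq_le hw hμ hμmono hξ hanti M hf.1 hf.2 hfδ

end TruncationUpperBound

theorem stmt8_general
    (w : ℕ → H) (hw_on : Orthonormal ℝ w)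
    (μ ξ : ℕ → ℝ)
    (hμ0 : 0 < μ 0) (hμmono : Monotone μ)
    (hξ0 : 0 < ξ 0) (hξmono : Monotone ξ) (hξtop : Tendsto ξ atTop atTop)
    (hanti : Antitone fun k => μ k / ξ k) :
    ∀ δ : ℝ, 0 < δ → δ < 1 / ξ 0 → ∀ N : ℕ, Ncrit ξ δ < N →
      (ENNReal.ofReal (Real.sqrt 2))⁻¹ *
            recErr w μ ξ δ (Gtrunc w (Ncrit ξ δ)) (Psitrunc w μ (Ncrit ξ δ)) ≤
          recErr w μ ξ δ (Gtrunc w N) (Psitrunc w μ N) ∧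
        (ENNReal.ofReal (Real.sqrt 2))⁻¹ * Ropt w μ ξ δ (Ncrit ξ δ) ≤
          (ENNReal.ofReal (Real.sqrt 2))⁻¹ *
            recErr w μ ξ δ (Gtrunc w (Ncrit ξ δ)) (Psitrunc w μ (Ncrit ξ δ)) := by
  intro δ hδ _ N hN
  set M := Ncrit ξ δ
  have hμ : ∀ k, 0 ≤ μ k := fun k => hμ0.le.trans (hμmono (Nat.zero_le k))
  have hξ : ∀ k, 0 < ξ k := fun k => hξ0.trans_le (hξmono (Nat.zero_le k))
  have hhead : μ (M - 1) * δ ≤ μ (N - 1) * δ := by gcongr; exact hμmono (by omega)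
  have htail : μ M / ξ M ≤ μ (N - 1) * δ := by
    rw [div_le_iff₀ (hξ M)]
    have := (div_le_iff₀ hδ).1 (one_div_le_apply_Ncrit hξtop δ)
    nlinarith [hμ M, hμmono (show M ≤ N - 1 by omega)]
  have hsqrt : √((μ (M - 1) * δ) ^ 2 + (μ M / ξ M) ^ 2) ≤ √2 * (μ (N - 1) * δ) := by
    rw [Real.sqrt_le_left (mul_nonneg (Real.sqrt_nonneg 2) (mul_nonneg (hμ _) hδ.le)),
      mul_pow √2, Real.sq_sqrt zero_le_two]
    nlinarith [div_nonneg (hμ M) (hξ M).le, mul_nonneg (hμ (M - 1)) hδ.le]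
  refine ⟨?_, by gcongr; exact Ropt_le_recErr (continuous_Gtrunc w M) _⟩
  rw [ENNReal.inv_mul_le_iff (by simp) ENNReal.ofReal_ne_top]
  calc recErr w μ ξ δ (Gtrunc w M) (Psitrunc w μ M)
      ≤ ENNReal.ofReal (√2 * (μ (N - 1) * δ)) :=
        (recErr_trunc_le hw_on hμ hμmono hξ hanti M).trans (ENNReal.ofReal_le_ofReal hsqrt)
    _ ≤ ENNReal.ofReal √2 * recErr w μ ξ δ (Gtrunc w N) (Psitrunc w μ N) := by
        rw [ENNReal.ofReal_mul (Real.sqrt_nonneg 2)]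
        gcongr
        exact ofReal_mul_le_recErr_trunc hw_on hδ.le (by omega)

/-- no substantial gain from truncation with `N` above `N_δ`. -/
theorem stmt8
    (w : ℕ → H) (hw_on : Orthonormal ℝ w)
    (hw_dense : Dense (Submodule.span ℝ (Set.range w) : Set H))
    (μ ξ : ℕ → ℝ)
    (hμ0 : 0 < μ 0) (hμmono : Monotone μ) (hμtop : Tendsto μ atTop atTop)
    (hξ0 : 0 < ξ 0) (hξmono : Monotone ξ) (hξtop : Tendsto ξ atTop atTop)
    (hratio : Tendsto (fun k => μ k / ξ k) atTop (nhds 0))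
    (hanti : Antitone fun k => μ k / ξ k) :
    ∀ δ : ℝ, 0 < δ → δ < 1 / ξ 0 → ∀ N : ℕ, Ncrit ξ δ < N →
      (ENNReal.ofReal (Real.sqrt 2))⁻¹ *
            recErr w μ ξ δ (Gtrunc w (Ncrit ξ δ)) (Psitrunc w μ (Ncrit ξ δ)) ≤
          recErr w μ ξ δ (Gtrunc w N) (Psitrunc w μ N) ∧
        (ENNReal.ofReal (Real.sqrt 2))⁻¹ * Ropt w μ ξ δ (Ncrit ξ δ) ≤
          (ENNReal.ofReal (Real.sqrt 2))⁻¹ *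
            recErr w μ ξ δ (Gtrunc w (Ncrit ξ δ)) (Psitrunc w μ (Ncrit ξ δ)) :=
  stmt8_general w hw_on μ ξ hμ0 hμmono hξ0 hξmono hξtop hanti
end
end

section
/- Exact order for critical noise levels: assume the sequence {μ_k/ξ_k} is monotone nonincreasing with μ_k/ξ_k → 0, and let δ > 0 satisfy δ = 1/ξ_{N_δ}. Then μ_{N_δ}/ξ_{N_δ} ≤ R_δ(A,W)_H ≤ R_{N_δ,δ}(A,W)_H ≤ ε_δ(A,W,G̃_{N_δ},Ψ̃_{N_δ})_H ≤ √2 · μ_{N_δ}/ξ_{N_δ}. -/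
noncomputable section

open Filter
open scoped ENNReal RealInnerProductSpace

variable {H : Type*} [NormedAddCommGroup H] [InnerProductSpace ℝ H] [CompleteSpace H]

private lemma summable_smul_of_sq {w : ℕ → H} (hw : Orthonormal ℝ w) {a : ℕ → ℝ}
    (ha : Summable fun i => a i ^ 2) : Summable fun i => a i • w i := by
  have h := (hw.orthogonalFamily.summable_iff_norm_sq_summable a).2
    (by simpa [Real.norm_eq_abs, sq_abs] using ha)
  simpa [LinearIsometry.toSpanSingleton_apply] using h

private lemma norm_sq_tsum_smul {w : ℕ → H} (hw : Orthonormal ℝ w) {a : ℕ → ℝ}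
    (ha : Summable fun i => a i ^ 2) :
    ‖∑' i, a i • w i‖ ^ 2 = ∑' i, a i ^ 2 := by
  have hs := summable_smul_of_sq hw ha
  have h1 : Tendsto (fun s : Finset ℕ => ‖∑ i ∈ s, a i • w i‖ ^ 2) atTop
      (nhds (‖∑' i, a i • w i‖ ^ 2)) :=
    ((continuous_norm.pow 2).tendsto _).comp hs.hasSum
  have heq : ∀ s : Finset ℕ, ‖∑ i ∈ s, a i • w i‖ ^ 2 = ∑ i ∈ s, a i ^ 2 := by
    intro s
    have := hw.orthogonalFamily.norm_sum (fun i => a i) s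
    simpa [LinearIsometry.toSpanSingleton_apply, Real.norm_eq_abs, sq_abs] using this
  have h1' : Tendsto (fun s : Finset ℕ => ∑ i ∈ s, a i ^ 2) atTop
      (nhds (‖∑' i, a i • w i‖ ^ 2)) := by
    simpa [Function.comp, heq] using h1
  exact tendsto_nhds_unique h1' ha.hasSum


/-- exact order for critical noise levels `δ = 1/ξ_{N_δ}`. -/
theorem stmt10
    (w : ℕ → H) (hw_on : Orthonormal ℝ w)
    (hw_dense : Dense (Submodule.span ℝ (Set.range w) : Set H))
    (μ ξ : ℕ → ℝ)
    (hμ0 : 0 < μ 0) (hμmono : Monotone μ) (hμtop : Tendsto μ atTop atTop)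
    (hξ0 : 0 < ξ 0) (hξmono : Monotone ξ) (hξtop : Tendsto ξ atTop atTop)
    (hratio : Tendsto (fun k => μ k / ξ k) atTop (nhds 0))
    (hanti : Antitone fun k => μ k / ξ k) :
    ∀ δ : ℝ, 0 < δ → δ = 1 / ξ (Ncrit ξ δ) →
      ENNReal.ofReal (μ (Ncrit ξ δ) / ξ (Ncrit ξ δ)) ≤ RoptAll w μ ξ δ ∧
        RoptAll w μ ξ δ ≤ Ropt w μ ξ δ (Ncrit ξ δ) ∧
          Ropt w μ ξ δ (Ncrit ξ δ) ≤
            recErr w μ ξ δ (Gtrunc w (Ncrit ξ δ)) (Psitrunc w μ (Ncrit ξ δ)) ∧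
            recErr w μ ξ δ (Gtrunc w (Ncrit ξ δ)) (Psitrunc w μ (Ncrit ξ δ)) ≤
              ENNReal.ofReal (Real.sqrt 2 * (μ (Ncrit ξ δ) / ξ (Ncrit ξ δ))) := by
  intro δ hδpos hδeq
  set N := Ncrit ξ δ with hN
  have hξpos : ∀ k, 0 < ξ k := fun k => lt_of_lt_of_le hξ0 (hξmono (Nat.zero_le k))
  have hμpos : ∀ k, 0 < μ k := fun k => lt_of_lt_of_le hμ0 (hμmono (Nat.zero_le k))
  have hξN : 0 < ξ N := hξpos N
  have hμN : 0 < μ N := hμpos N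
  set r := μ N / ξ N with hr
  have hrpos : 0 < r := div_pos hμN hξN
  -- ### Lower bound
  have hlow : ∀ (N' : ℕ) (G : H → Fin N' → ℝ) (Ψ : (Fin N' → ℝ) → H),
      ENNReal.ofReal r ≤ recErr w μ ξ δ G Ψ := by
    intro N' G Ψ
    set f₀ : H := (ξ N)⁻¹ • w N with hf0
    have hip : ∀ k, ⟪f₀, w k⟫ = if N = k then (ξ N)⁻¹ else 0 := by
      intro k
      rw [hf0, real_inner_smul_left, orthonormal_iff_ite.mp hw_on N k]
      split <;> simp
    have hmem : MemW w ξ f₀ := by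
      apply summable_of_ne_finset_zero (s := ({N} : Finset ℕ))
      intro k hk
      simp only [Finset.mem_singleton] at hk
      simp [hip k, Ne.symm hk]
    have hnormW : normW w ξ f₀ ≤ 1 := by
      rw [normW, tsum_eq_single N (fun k hk => by simp [hip k, Ne.symm hk])]
      rw [hip N, if_pos rfl]
      rw [show ξ N ^ 2 * ((ξ N)⁻¹) ^ 2 = 1 by field_simp]
      simp
    have hmemneg : MemW w ξ (-f₀) := by
      have : (fun k => ξ k ^ 2 * ⟪-f₀, w k⟫ ^ 2) = fun k => ξ k ^ 2 * ⟪f₀, w k⟫ ^ 2 := by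
        funext k; simp [inner_neg_left]
      rw [MemW, this]; exact hmem
    have hnormWneg : normW w ξ (-f₀) ≤ 1 := by
      have : (fun k => ξ k ^ 2 * ⟪-f₀, w k⟫ ^ 2) = fun k => ξ k ^ 2 * ⟪f₀, w k⟫ ^ 2 := by
        funext k; simp [inner_neg_left]
      rw [normW, this]; exact hnormW
    have hA : opA w μ f₀ = (μ N * (ξ N)⁻¹) • w N := by
      rw [opA, tsum_eq_single N (fun k hk => by simp [hip k, Ne.symm hk])]
      rw [hip N, if_pos rfl]
    have hAnorm : ‖opA w μ f₀‖ = r := by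
      rw [hA, norm_smul, hw_on.1 N, mul_one, Real.norm_eq_abs,
        abs_of_pos (mul_pos hμN (inv_pos.mpr hξN)), hr, div_eq_mul_inv]
    have hAneg : opA w μ (-f₀) = -opA w μ f₀ := by
      rw [opA, opA, ← tsum_neg]
      exact tsum_congr fun k => by simp [inner_neg_left]
    have hd0 : ‖f₀ - 0‖ ≤ δ := by
      rw [sub_zero, hf0, norm_smul, hw_on.1 N, mul_one, Real.norm_eq_abs,
        abs_of_pos (inv_pos.mpr hξN), hδeq, one_div]
    have hd0' : ‖-f₀ - 0‖ ≤ δ := by rwa [sub_zero, norm_neg, ← sub_zero f₀]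
    set y := Ψ (G 0) with hy
    have hle1 : ENNReal.ofReal ‖opA w μ f₀ - y‖ ≤ recErr w μ ξ δ G Ψ :=
      le_iSup_of_le f₀ <| le_iSup_of_le ⟨hmem, hnormW⟩ <| le_iSup_of_le (0 : H) <|
        le_iSup_of_le hd0 le_rfl
    have hle2 : ENNReal.ofReal ‖opA w μ (-f₀) - y‖ ≤ recErr w μ ξ δ G Ψ :=
      le_iSup_of_le (-f₀) <| le_iSup_of_le ⟨hmemneg, hnormWneg⟩ <| le_iSup_of_le (0 : H) <|
        le_iSup_of_le hd0' le_rfl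
    have htri : 2 * r ≤ ‖opA w μ f₀ - y‖ + ‖-opA w μ f₀ - y‖ := by
      have t := norm_sub_le (opA w μ f₀ - y) (-opA w μ f₀ - y)
      have e : (opA w μ f₀ - y) - (-opA w μ f₀ - y) = opA w μ f₀ + opA w μ f₀ := by abel
      rw [e] at t
      have h2 : ‖opA w μ f₀ + opA w μ f₀‖ = 2 * r := by
        rw [← two_smul ℝ, norm_smul, hAnorm, Real.norm_eq_abs]; norm_num
      linarith
    rcases le_total r ‖opA w μ f₀ - y‖ with h | h
    · exact le_trans (ENNReal.ofReal_le_ofReal h) hle1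
    · have h' : r ≤ ‖opA w μ (-f₀) - y‖ := by rw [hAneg]; linarith
      exact le_trans (ENNReal.ofReal_le_ofReal h') hle2
  -- ### Upper bound for truncation method
  have hup : ∀ f : H, (MemW w ξ f ∧ normW w ξ f ≤ 1) → ∀ fδ : H, ‖f - fδ‖ ≤ δ →
      ‖opA w μ f - Psitrunc w μ N (Gtrunc w N fδ)‖ ≤ Real.sqrt 2 * r := by
    rintro f ⟨hfW, hfn⟩ fδ hfd
    set a : ℕ → ℝ := fun k => μ k * ⟪f, w k⟫ with ha
    set d : ℕ → ℝ := fun k => if k < N then μ k * ⟪fδ, w k⟫ else 0 with hd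
    set c : ℕ → ℝ := fun k => a k - d k with hc
    have hak : ∀ (k : ℕ) (x : ℝ), (μ k * x) ^ 2 = (μ k / ξ k) ^ 2 * (ξ k ^ 2 * x ^ 2) := by
      intro k x
      have := (hξpos k).ne'
      field_simp
    have ha2 : Summable fun k => a k ^ 2 := by
      apply Summable.of_nonneg_of_le (fun k => sq_nonneg _) _ (hfW.mul_left ((μ 0 / ξ 0) ^ 2))
      intro k
      rw [ha, hak k]
      exact mul_le_mul_of_nonneg_right
        (pow_le_pow_left₀ (div_nonneg (hμpos k).le (hξpos k).le) (hanti (Nat.zero_le k)) 2)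
        (mul_nonneg (sq_nonneg _) (sq_nonneg _))
    have hd2 : Summable fun k => d k ^ 2 := by
      apply summable_of_ne_finset_zero (s := Finset.range N)
      intro k hk
      rw [Finset.mem_range] at hk
      simp [hd, hk]
    have hceq : ∀ k, ¬ k < N → c k = a k := by
      intro k hk; rw [hc]; simp [hd, hk]
    have hc2 : Summable fun k => c k ^ 2 := by
      have h1 : Summable fun k => c k ^ 2 - a k ^ 2 := by
        apply summable_of_ne_finset_zero (s := Finset.range N)
        intro k hk
        rw [Finset.mem_range] at hk
        rw [hceq k hk, sub_self]
      have := h1.add ha2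
      simpa using this
    have hsa : Summable fun k => a k • w k := summable_smul_of_sq hw_on ha2
    have hsd : Summable fun k => d k • w k := summable_smul_of_sq hw_on hd2
    have hPsi : Psitrunc w μ N (Gtrunc w N fδ) = ∑' k, d k • w k := by
      rw [tsum_eq_sum (s := Finset.range N) (fun k hk => by
        rw [Finset.mem_range] at hk; simp [hd, hk])]
      rw [Psitrunc, ← Fin.sum_univ_eq_sum_range (fun k => d k • w k) N]
      refine Finset.sum_congr rfl fun k _ => ?_
      simp [hd, Gtrunc, k.isLt]
    have herr : opA w μ f - Psitrunc w μ N (Gtrunc w N fδ) = ∑' k, c k • w k := by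
      have h1 : opA w μ f = ∑' k, a k • w k := rfl
      rw [h1, hPsi, ← Summable.tsum_sub hsa hsd]
      exact tsum_congr fun k => (sub_smul (a k) (d k) (w k)).symm
    have hnorm2 : ‖opA w μ f - Psitrunc w μ N (Gtrunc w N fδ)‖ ^ 2 = ∑' k, c k ^ 2 := by
      rw [herr]; exact norm_sq_tsum_smul hw_on hc2
    -- front estimate
    have hB : ∑ k ∈ Finset.range N, ⟪f - fδ, w k⟫ ^ 2 ≤ ‖f - fδ‖ ^ 2 := by
      have := hw_on.sum_inner_products_le (s := Finset.range N) (f - fδ)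
      simpa [Real.norm_eq_abs, sq_abs, real_inner_comm] using this
    have hfront : ∑ k ∈ Finset.range N, c k ^ 2 ≤ r ^ 2 := by
      have h1 : ∀ k ∈ Finset.range N, c k ^ 2 ≤ μ N ^ 2 * ⟪f - fδ, w k⟫ ^ 2 := by
        intro k hk
        rw [Finset.mem_range] at hk
        have hck : c k = μ k * ⟪f - fδ, w k⟫ := by
          simp only [hc, ha, hd, if_pos hk, inner_sub_left]
          ring
        rw [hck, mul_pow]
        exact mul_le_mul_of_nonneg_right
          (pow_le_pow_left₀ (hμpos k).le (hμmono hk.le) 2) (sq_nonneg _)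
      calc ∑ k ∈ Finset.range N, c k ^ 2
          ≤ ∑ k ∈ Finset.range N, μ N ^ 2 * ⟪f - fδ, w k⟫ ^ 2 := Finset.sum_le_sum h1
        _ = μ N ^ 2 * ∑ k ∈ Finset.range N, ⟪f - fδ, w k⟫ ^ 2 := by rw [Finset.mul_sum]
        _ ≤ μ N ^ 2 * ‖f - fδ‖ ^ 2 := by
            exact mul_le_mul_of_nonneg_left hB (sq_nonneg _)
        _ ≤ μ N ^ 2 * δ ^ 2 := by
            exact mul_le_mul_of_nonneg_left
              (pow_le_pow_left₀ (norm_nonneg _) hfd 2) (sq_nonneg _)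
        _ = r ^ 2 := by rw [hδeq, hr]; field_simp
    -- tail estimate
    have hS1 : ∑' k, ξ k ^ 2 * ⟪f, w k⟫ ^ 2 ≤ 1 := by
      have h0 : 0 ≤ ∑' k, ξ k ^ 2 * ⟪f, w k⟫ ^ 2 :=
        tsum_nonneg fun k => mul_nonneg (sq_nonneg _) (sq_nonneg _)
      have h1 : Real.sqrt (∑' k, ξ k ^ 2 * ⟪f, w k⟫ ^ 2) ≤ 1 := hfn
      nlinarith [Real.sq_sqrt h0, Real.sqrt_nonneg (∑' k, ξ k ^ 2 * ⟪f, w k⟫ ^ 2)]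
    have hcompl_le : ∑' (k : ↥((↑(Finset.range N) : Set ℕ)ᶜ)), ξ (k : ℕ) ^ 2 * ⟪f, w k⟫ ^ 2
        ≤ ∑' k, ξ k ^ 2 * ⟪f, w k⟫ ^ 2 := by
      have := Summable.sum_add_tsum_compl (s := Finset.range N) hfW
      have hnn : 0 ≤ ∑ k ∈ Finset.range N, ξ k ^ 2 * ⟪f, w k⟫ ^ 2 :=
        Finset.sum_nonneg fun k _ => mul_nonneg (sq_nonneg _) (sq_nonneg _)
      linarith
    have htail : ∑' (k : ↥((↑(Finset.range N) : Set ℕ)ᶜ)), c (k : ℕ) ^ 2 ≤ r ^ 2 := by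
      have hle : ∀ k : ↥((↑(Finset.range N) : Set ℕ)ᶜ),
          c (k : ℕ) ^ 2 ≤ r ^ 2 * (ξ (k : ℕ) ^ 2 * ⟪f, w (k : ℕ)⟫ ^ 2) := by
        rintro ⟨k, hk⟩
        simp only [Set.mem_compl_iff, Finset.coe_range, Set.mem_Iio, not_lt] at hk
        have hk' : ¬ k < N := not_lt.mpr hk
        rw [hceq k hk', ha]
        rw [hak k]
        exact mul_le_mul_of_nonneg_right
          (pow_le_pow_left₀ (div_nonneg (hμpos k).le (hξpos k).le) (hanti hk) 2)
          (mul_nonneg (sq_nonneg _) (sq_nonneg _))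
      calc ∑' (k : ↥((↑(Finset.range N) : Set ℕ)ᶜ)), c (k : ℕ) ^ 2
          ≤ ∑' (k : ↥((↑(Finset.range N) : Set ℕ)ᶜ)),
              r ^ 2 * (ξ (k : ℕ) ^ 2 * ⟪f, w (k : ℕ)⟫ ^ 2) :=
            Summable.tsum_le_tsum hle (hc2.subtype _) ((hfW.mul_left _).subtype _)
        _ = r ^ 2 * ∑' (k : ↥((↑(Finset.range N) : Set ℕ)ᶜ)),
              ξ (k : ℕ) ^ 2 * ⟪f, w (k : ℕ)⟫ ^ 2 := tsum_mul_left
        _ ≤ r ^ 2 * 1 := by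
            exact mul_le_mul_of_nonneg_left (le_trans hcompl_le hS1) (sq_nonneg _)
        _ = r ^ 2 := mul_one _
    have htot : ‖opA w μ f - Psitrunc w μ N (Gtrunc w N fδ)‖ ^ 2 ≤ 2 * r ^ 2 := by
      rw [hnorm2, ← Summable.sum_add_tsum_compl (s := Finset.range N) hc2]
      linarith
    have hfin : ‖opA w μ f - Psitrunc w μ N (Gtrunc w N fδ)‖ ^ 2 ≤ (Real.sqrt 2 * r) ^ 2 := by
      rw [mul_pow, Real.sq_sqrt (by norm_num : (0:ℝ) ≤ 2)]
      linarith
    have := Real.sqrt_le_sqrt hfin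
    rwa [Real.sqrt_sq (norm_nonneg _),
      Real.sqrt_sq (mul_nonneg (Real.sqrt_nonneg 2) hrpos.le)] at this
  refine ⟨?_, ?_, ?_, ?_⟩
  · exact le_iInf fun N' => le_iInf fun G => le_iInf fun hG => le_iInf fun Ψ => hlow N' G Ψ
  · exact iInf_le _ N
  · have hGc : Continuous (Gtrunc w N) :=
      continuous_pi fun k => Continuous.inner continuous_id continuous_const
    exact iInf_le_of_le (Gtrunc w N) (iInf_le_of_le hGc (iInf_le _ (Psitrunc w μ N)))
  · exact iSup_le fun f => iSup_le fun hf => iSup_le fun fδ => iSup_le fun hfd =>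
      ENNReal.ofReal_le_ofReal (hup f hf fδ hfd)
end
end

section
/- Exact order for near-critical noise levels: assume the sequence {μ_k/ξ_k} is monotone nonincreasing with μ_k/ξ_k → 0, let c ≥ 1 be a constant, and let δ > 0 satisfy δ ≤ c/ξ_{N_δ}. Then μ_{N_δ}/ξ_{N_δ} ≤ R_δ(A,W)_H ≤ R_{N_δ,δ}(A,W)_H ≤ ε_δ(A,W,G̃_{N_δ},Ψ̃_{N_δ})_H ≤ (1+c²)^{1/2} · μ_{N_δ}/ξ_{N_δ}. -/
noncomputable section

open Filter
open scoped ENNReal RealInnerProductSpace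

variable {H : Type*} [NormedAddCommGroup H] [InnerProductSpace ℝ H] [CompleteSpace H]

set_option maxHeartbeats 2000000 in
/-- exact order for near-critical noise levels `δ ≤ c/ξ_{N_δ}`. -/
theorem stmt11
    (w : ℕ → H) (hw_on : Orthonormal ℝ w)
    (hw_dense : Dense (Submodule.span ℝ (Set.range w) : Set H))
    (μ ξ : ℕ → ℝ)
    (hμ0 : 0 < μ 0) (hμmono : Monotone μ) (hμtop : Tendsto μ atTop atTop)
    (hξ0 : 0 < ξ 0) (hξmono : Monotone ξ) (hξtop : Tendsto ξ atTop atTop)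
    (hratio : Tendsto (fun k => μ k / ξ k) atTop (nhds 0))
    (hanti : Antitone fun k => μ k / ξ k) :
    ∀ c : ℝ, 1 ≤ c → ∀ δ : ℝ, 0 < δ → δ ≤ c / ξ (Ncrit ξ δ) →
      ENNReal.ofReal (μ (Ncrit ξ δ) / ξ (Ncrit ξ δ)) ≤ RoptAll w μ ξ δ ∧
        RoptAll w μ ξ δ ≤ Ropt w μ ξ δ (Ncrit ξ δ) ∧
          Ropt w μ ξ δ (Ncrit ξ δ) ≤
            recErr w μ ξ δ (Gtrunc w (Ncrit ξ δ)) (Psitrunc w μ (Ncrit ξ δ)) ∧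
            recErr w μ ξ δ (Gtrunc w (Ncrit ξ δ)) (Psitrunc w μ (Ncrit ξ δ)) ≤
              ENNReal.ofReal (Real.sqrt (1 + c ^ 2) * (μ (Ncrit ξ δ) / ξ (Ncrit ξ δ))) := by
  
  intro c hc δ hδ hδc
  classical
  set N := Ncrit ξ δ with hNdef
  have ξpos : ∀ k, 0 < ξ k := fun k => lt_of_lt_of_le hξ0 (hξmono (Nat.zero_le k))
  have μpos : ∀ k, 0 < μ k := fun k => lt_of_lt_of_le hμ0 (hμmono (Nat.zero_le k))
  set r := μ N / ξ N with hrdef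
  have hrpos : 0 < r := div_pos (μpos N) (ξpos N)
  have hξN : 1 / δ ≤ ξ N := by
    have hne : {n : ℕ | 1 / δ ≤ ξ n}.Nonempty := (hξtop.eventually_ge_atTop (1 / δ)).exists
    exact Nat.sInf_mem hne
  have hδN : 1 / ξ N ≤ δ := by
    rw [div_le_iff₀ (ξpos N)]
    have h1 : 1 ≤ ξ N * δ := by
      have := (div_le_iff₀ hδ).mp hξN
      linarith
    linarith [mul_comm (ξ N) δ]
  have hww : ∀ i j, ⟪w i, w j⟫ = if i = j then (1 : ℝ) else 0 := orthonormal_iff_ite.mp hw_on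
  -- key ratio bound
  have hratiosq : ∀ n i : ℕ, n ≤ i → ∀ x : ℝ,
      (μ i * x) ^ 2 ≤ (μ n / ξ n) ^ 2 * (ξ i ^ 2 * x ^ 2) := by
    intro n i hni x
    have h1 : μ i / ξ i ≤ μ n / ξ n := hanti hni
    have h2 : 0 ≤ μ i / ξ i := le_of_lt (div_pos (μpos i) (ξpos i))
    have h3 : μ i = μ i / ξ i * ξ i := (div_mul_cancel₀ _ (ξpos i).ne').symm
    have h4 : (μ i / ξ i) ^ 2 * (ξ i ^ 2 * x ^ 2) = (μ i * x) ^ 2 := by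
      field_simp [(ξpos i).ne']
    calc (μ i * x) ^ 2 = (μ i / ξ i) ^ 2 * (ξ i ^ 2 * x ^ 2) := h4.symm
      _ ≤ (μ n / ξ n) ^ 2 * (ξ i ^ 2 * x ^ 2) :=
          mul_le_mul_of_nonneg_right (pow_le_pow_left₀ h2 h1 2) (by positivity)
  -- summability transfer
  have hsummable_smul : ∀ cf : ℕ → ℝ, Summable (fun k => cf k ^ 2) →
      Summable fun k => cf k • w k := by
    intro cf hcf
    have h := (hw_on.orthogonalFamily.summable_iff_norm_sq_summable cf).mpr
      (by simpa [Real.norm_eq_abs, sq_abs] using hcf)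
    simpa [LinearIsometry.toSpanSingleton_apply] using h
  -- coefficient extraction
  have hcoeff : ∀ (cf : ℕ → ℝ) (g : H), HasSum (fun k => cf k • w k) g →
      ∀ i, ⟪g, w i⟫ = cf i := by
    intro cf g hg i
    have h1 : HasSum (fun k => ⟪w i, cf k • w k⟫) ⟪w i, g⟫ := hg.mapL (innerSL ℝ (w i))
    have h2 : (fun k => ⟪w i, cf k • w k⟫) = fun k => if k = i then cf i else 0 := by
      funext k
      rw [real_inner_smul_right, hww i k]
      by_cases h : i = k
      · subst h; simp
      · simp [h, Ne.symm h]
    rw [h2] at h1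
    rw [real_inner_comm]
    exact h1.unique (hasSum_ite_eq i (cf i))
  refine ⟨?_, ?_, ?_, ?_⟩
  · -- lower bound
    refine le_iInf fun N' => le_iInf fun G => le_iInf fun _ => le_iInf fun Ψ => ?_
    set y := Ψ (G 0) with hydef
    set t := 1 / ξ N with htdef
    have ht : 0 < t := by rw [htdef]; exact one_div_pos.mpr (ξpos N)
    have hkey : ∀ s : ℝ, s = t ∨ s = -t →
        (MemW w ξ (s • w N) ∧ normW w ξ (s • w N) ≤ 1) ∧ ‖s • w N - 0‖ ≤ δ ∧
          opA w μ (s • w N) = (μ N * s) • w N := by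
      intro s hs
      have hs2 : s ^ 2 = t ^ 2 := by rcases hs with h | h <;> rw [h] <;> ring
      have habs : |s| = t := by
        rcases hs with h | h
        · rw [h]; exact abs_of_pos ht
        · rw [h, abs_neg]; exact abs_of_pos ht
      have hin : ∀ k, ⟪s • w N, w k⟫ = if k = N then s else 0 := by
        intro k
        rw [real_inner_smul_left, hww N k]
        by_cases h : N = k
        · subst h; simp
        · simp [h, Ne.symm h]
      have hts : ξ N ^ 2 * s ^ 2 = 1 := by
        rw [hs2, htdef]
        field_simp [(ξpos N).ne']
      refine ⟨⟨?_, ?_⟩, ?_, ?_⟩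
      · unfold MemW
        apply summable_of_ne_finset_zero (s := {N})
        intro k hk
        simp only [Finset.mem_singleton] at hk
        rw [hin k, if_neg hk]
        ring
      · unfold normW
        have htt : (∑' k, ξ k ^ 2 * ⟪s • w N, w k⟫ ^ 2) = 1 := by
          rw [tsum_eq_single N]
          · rw [hin N, if_pos rfl, hts]
          · intro k hk; rw [hin k, if_neg hk]; ring
        rw [htt, Real.sqrt_one]
      · rw [sub_zero, norm_smul, hw_on.1 N, mul_one, Real.norm_eq_abs, habs]
        exact hδN
      · unfold opA
        rw [tsum_eq_single N]
        · rw [hin N, if_pos rfl]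
        · intro k hk; rw [hin k, if_neg hk, mul_zero, zero_smul]
    obtain ⟨hmP, hddP, hAAP⟩ := hkey t (Or.inl rfl)
    obtain ⟨hmM, hddM, hAAM⟩ := hkey (-t) (Or.inr rfl)
    have hstep : ∀ s : ℝ,
        (MemW w ξ (s • w N) ∧ normW w ξ (s • w N) ≤ 1) → ‖s • w N - 0‖ ≤ δ →
        opA w μ (s • w N) = (μ N * s) • w N →
        ENNReal.ofReal ‖(μ N * s) • w N - y‖ ≤ recErr w μ ξ δ G Ψ := by
      intro s h1 h2 h3
      unfold recErr
      refine le_iSup_of_le (s • w N) (le_iSup_of_le h1 (le_iSup_of_le (0 : H)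
        (le_iSup_of_le h2 ?_)))
      rw [h3]
    have hP := hstep t hmP hddP hAAP
    have hM := hstep (-t) hmM hddM hAAM
    have hsum2 : 2 * r ≤ ‖(μ N * t) • w N - y‖ + ‖(μ N * -t) • w N - y‖ := by
      have h := norm_sub_le ((μ N * t) • w N - y) ((μ N * -t) • w N - y)
      have he : (μ N * t) • w N - y - ((μ N * -t) • w N - y) = (2 * (μ N * t)) • w N := by
        module
      rw [he, norm_smul, hw_on.1 N, mul_one, Real.norm_eq_abs] at h
      have habs : |2 * (μ N * t)| = 2 * (μ N * t) := abs_of_pos (by nlinarith [μpos N, ht])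
      have hrt : μ N * t = r := by rw [htdef, hrdef, mul_one_div]
      rw [habs] at h
      linarith [hrt]
    rcases le_total ‖(μ N * t) • w N - y‖ ‖(μ N * -t) • w N - y‖ with h | h
    · exact le_trans (ENNReal.ofReal_le_ofReal (by linarith)) hM
    · exact le_trans (ENNReal.ofReal_le_ofReal (by linarith)) hP
  · -- RoptAll ≤ Ropt N
    exact iInf_le _ N
  · -- Ropt N ≤ recErr of truncation
    have hG : Continuous (Gtrunc w N) :=
      continuous_pi fun k => Continuous.inner continuous_id continuous_const
    exact iInf_le_of_le (Gtrunc w N) (iInf_le_of_le hG (iInf_le _ (Psitrunc w μ N)))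
  · -- upper bound for truncation
    unfold recErr
    refine iSup_le fun f => iSup_le fun hf => iSup_le fun fδ => iSup_le fun hfδ => ?_
    obtain ⟨hfW, hfn⟩ := hf
    set a : ℕ → ℝ := fun k => ⟪f, w k⟫ with hadef
    set d : ℕ → ℝ := fun k => ⟪f - fδ, w k⟫ with hddef
    have hfW' : Summable fun k => ξ k ^ 2 * a k ^ 2 := hfW
    have hW1 : (∑' k, ξ k ^ 2 * a k ^ 2) ≤ 1 := by
      have h0 : 0 ≤ ∑' k, ξ k ^ 2 * a k ^ 2 := tsum_nonneg fun k => by positivity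
      have h1 : Real.sqrt (∑' k, ξ k ^ 2 * a k ^ 2) ≤ 1 := hfn
      nlinarith [Real.sq_sqrt h0, Real.sqrt_nonneg (∑' k, ξ k ^ 2 * a k ^ 2)]
    have hμa_sq : Summable fun k => (μ k * a k) ^ 2 :=
      Summable.of_nonneg_of_le (fun k => sq_nonneg _)
        (fun k => hratiosq 0 k (Nat.zero_le k) (a k)) (hfW'.mul_left _)
    have hAsum : HasSum (fun k => (μ k * a k) • w k) (opA w μ f) :=
      (hsummable_smul _ hμa_sq).hasSum
    set g := opA w μ f - Psitrunc w μ N (Gtrunc w N fδ) with hgdef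
    have hcoe_g : ∀ i, ⟪g, w i⟫ = if i < N then μ i * d i else μ i * a i := by
      intro i
      have h1 : ⟪opA w μ f, w i⟫ = μ i * a i := hcoeff _ _ hAsum i
      have h2 : ⟪Psitrunc w μ N (Gtrunc w N fδ), w i⟫ =
          if i < N then μ i * ⟪fδ, w i⟫ else 0 := by
        unfold Psitrunc Gtrunc
        rw [sum_inner]
        by_cases hi : i < N
        · rw [if_pos hi, Finset.sum_eq_single (⟨i, hi⟩ : Fin N)]
          · rw [real_inner_smul_left, hww i i, if_pos rfl, mul_one]
          · intro k _ hk
            have hki : (k : ℕ) ≠ i := fun h => hk (Fin.ext h)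
            rw [real_inner_smul_left, hww k i, if_neg hki, mul_zero]
          · intro h; exact absurd (Finset.mem_univ _) h
        · rw [if_neg hi]
          apply Finset.sum_eq_zero
          intro k _
          have hki : (k : ℕ) ≠ i := by have := k.isLt; omega
          rw [real_inner_smul_left, hww k i, if_neg hki, mul_zero]
      rw [hgdef, inner_sub_left, h1, h2]
      by_cases hi : i < N
      · rw [if_pos hi, if_pos hi]
        have hdi : d i = a i - ⟪fδ, w i⟫ := by rw [hddef, hadef]; simp [inner_sub_left]
        rw [hdi]; ring
      · rw [if_neg hi, if_neg hi, sub_zero]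
    have hgsq_summable : Summable fun i => ⟪g, w i⟫ ^ 2 := by
      have h := hw_on.inner_products_summable g
      simpa [real_inner_comm, Real.norm_eq_abs, sq_abs] using h
    have hd_sum : Summable fun i => d i ^ 2 := by
      have h := hw_on.inner_products_summable (f - fδ)
      simpa [hddef, real_inner_comm, Real.norm_eq_abs, sq_abs] using h
    have hbound : ∀ i, ⟪g, w i⟫ ^ 2 ≤ μ N ^ 2 * d i ^ 2 + r ^ 2 * (ξ i ^ 2 * a i ^ 2) := by
      intro i
      rw [hcoe_g i]
      by_cases hi : i < N
      · rw [if_pos hi]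
        have h1 : μ i ≤ μ N := hμmono (le_of_lt hi)
        have h2 : 0 ≤ r ^ 2 * (ξ i ^ 2 * a i ^ 2) := by positivity
        nlinarith [mul_le_mul_of_nonneg_right (pow_le_pow_left₀ (μpos i).le h1 2) (sq_nonneg (d i)), h2]
      · rw [if_neg hi]
        have h1 := hratiosq N i (le_of_not_gt hi) (a i)
        have h2 : 0 ≤ μ N ^ 2 * d i ^ 2 := by positivity
        rw [hrdef]
        linarith
    have hd_le : (∑' i, d i ^ 2) ≤ δ ^ 2 := by
      have h1 := hw_on.tsum_inner_products_le (f - fδ)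
      have h2 : ‖f - fδ‖ ^ 2 ≤ δ ^ 2 := by nlinarith [norm_nonneg (f - fδ)]
      have h3 : (∑' i, d i ^ 2) = ∑' i, ‖⟪w i, f - fδ⟫‖ ^ 2 := by
        apply tsum_congr
        intro i
        rw [hddef, Real.norm_eq_abs, sq_abs, real_inner_comm]
      rw [h3]
      exact le_trans h1 h2
    have htsum : (∑' i, ⟪g, w i⟫ ^ 2) ≤ μ N ^ 2 * δ ^ 2 + r ^ 2 := by
      have hs2 : Summable fun i => μ N ^ 2 * d i ^ 2 + r ^ 2 * (ξ i ^ 2 * a i ^ 2) :=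
        (hd_sum.mul_left _).add (hfW'.mul_left _)
      calc (∑' i, ⟪g, w i⟫ ^ 2)
          ≤ ∑' i, (μ N ^ 2 * d i ^ 2 + r ^ 2 * (ξ i ^ 2 * a i ^ 2)) :=
            Summable.tsum_le_tsum hbound hgsq_summable hs2
        _ = μ N ^ 2 * (∑' i, d i ^ 2) + r ^ 2 * ∑' i, ξ i ^ 2 * a i ^ 2 := by
            rw [Summable.tsum_add (hd_sum.mul_left _) (hfW'.mul_left _), tsum_mul_left, tsum_mul_left]
        _ ≤ μ N ^ 2 * δ ^ 2 + r ^ 2 * 1 :=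
            add_le_add (mul_le_mul_of_nonneg_left hd_le (sq_nonneg _))
              (mul_le_mul_of_nonneg_left hW1 (sq_nonneg _))
        _ = μ N ^ 2 * δ ^ 2 + r ^ 2 := by ring
    have hdense' : ⊤ ≤ (Submodule.span ℝ (Set.range w)).topologicalClosure :=
      (Submodule.dense_iff_topologicalClosure_eq_top.mp hw_dense).ge
    set b : HilbertBasis ℕ ℝ H := HilbertBasis.mk hw_on hdense' with hbdef
    have hb : ⇑b = w := HilbertBasis.coe_mk _ _
    have hnorm_sq : ‖g‖ ^ 2 = ∑' i, ⟪g, w i⟫ ^ 2 := by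
      have h0 := b.tsum_inner_mul_inner g g
      rw [hb] at h0
      calc ‖g‖ ^ 2 = ⟪g, g⟫ := (real_inner_self_eq_norm_sq g).symm
        _ = ∑' i, ⟪g, w i⟫ * ⟪w i, g⟫ := h0.symm
        _ = ∑' i, ⟪g, w i⟫ ^ 2 := tsum_congr fun i => by rw [sq, real_inner_comm (w i) g]
    have hgle : ‖g‖ ≤ Real.sqrt (1 + c ^ 2) * r := by
      have hδ2 : δ ^ 2 ≤ (c / ξ N) ^ 2 := pow_le_pow_left₀ hδ.le hδc 2
      have hcr : μ N ^ 2 * (c / ξ N) ^ 2 = c ^ 2 * r ^ 2 := by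
        rw [hrdef]
        field_simp
      have h1 : ‖g‖ ^ 2 ≤ (1 + c ^ 2) * r ^ 2 := by nlinarith [sq_nonneg (μ N)]
      calc ‖g‖ = Real.sqrt (‖g‖ ^ 2) := (Real.sqrt_sq (norm_nonneg g)).symm
        _ ≤ Real.sqrt ((1 + c ^ 2) * r ^ 2) := Real.sqrt_le_sqrt h1
        _ = Real.sqrt (1 + c ^ 2) * r := by
            rw [Real.sqrt_mul (by positivity), Real.sqrt_sq hrpos.le]
    exact ENNReal.ofReal_le_ofReal hgle
end
end

section
/- Order optimality of the truncation method for slowly growing ξ: assume the sequence {μ_k/ξ_k} is monotone nonincreasing with μ_k/ξ_k → 0 and ξ_k = c·k̲^η·e^{α k^β} where k̲ := max{1,k}, c > 0, 0 ≤ β ≤ 1, η, α ≥ 0, α + η > 0. Fix constants c₁'', c₂'' with 0 < c₁'' ≤ c₂''. Then there exist constants c', c'' > 0 such that for every δ > 0 and every N ≥ 1 with c₁''·δ ≤ 1/ξ_N ≤ c₂''·δ, one has c'·μ_N/ξ_N ≤ R_δ(A,W)_H ≤ R_{N,δ}(A,W)_H ≤ c''·μ_N/ξ_N; these order-optimal bounds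 are realized by the truncation method, i.e. also ε_δ(A,W,G̃_N,Ψ̃_N)_H ≤ c''·μ_N/ξ_N. -/
set_option maxHeartbeats 1000000

noncomputable section

open Filter
open scoped ENNReal RealInnerProductSpace

variable {H : Type*} [NormedAddCommGroup H] [InnerProductSpace ℝ H] [CompleteSpace H]

section Aux

variable {w : ℕ → H}

private lemma span_top (hw_dense : Dense (Submodule.span ℝ (Set.range w) : Set H)) :
    ⊤ ≤ (Submodule.span ℝ (Set.range w)).topologicalClosure := by
  intro x _
  rw [← SetLike.mem_coe, Submodule.topologicalClosure_coe]
  exact hw_dense x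

/-- Parseval identity for the coefficients. -/
private lemma parseval (hw_on : Orthonormal ℝ w)
    (hw_dense : Dense (Submodule.span ℝ (Set.range w) : Set H)) (g : H) :
    HasSum (fun i => ⟪w i, g⟫ ^ 2) (‖g‖ ^ 2) := by
  have h := (HilbertBasis.mk hw_on (span_top hw_dense)).hasSum_inner_mul_inner g g
  rw [HilbertBasis.coe_mk] at h
  rw [real_inner_self_eq_norm_sq] at h
  have he : (fun i => ⟪g, w i⟫ * ⟪w i, g⟫) = fun i => ⟪w i, g⟫ ^ 2 := by
    funext i; rw [real_inner_comm g (w i), sq]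
  rwa [he] at h

/-- An ℓ² sequence of coefficients gives a summable expansion whose inner
products recover the coefficients. -/
private lemma hasSum_coeff (hw_on : Orthonormal ℝ w)
    (hw_dense : Dense (Submodule.span ℝ (Set.range w) : Set H))
    {c : ℕ → ℝ} (hc : Summable fun k => c k ^ 2) :
    ∃ s : H, HasSum (fun k => c k • w k) s ∧ ∀ i, ⟪w i, s⟫ = c i := by
  set b := HilbertBasis.mk hw_on (span_top hw_dense) with hb
  have hmem : Memℓp c 2 := by
    apply memℓp_gen
    have he : (fun i => ‖c i‖ ^ (2 : ℝ≥0∞).toReal) = fun i => c i ^ 2 := by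
      funext i
      rw [show ((2 : ℝ≥0∞).toReal) = ((2 : ℕ) : ℝ) by norm_num, Real.rpow_natCast,
        Real.norm_eq_abs, sq_abs]
    rwa [he]
  set F : lp (fun _ : ℕ => ℝ) 2 := ⟨c, hmem⟩ with hF
  have hs := b.hasSum_repr_symm F
  have hbw : ∀ i, b i = w i := fun i => congrFun (HilbertBasis.coe_mk hw_on (span_top hw_dense)) i
  refine ⟨b.repr.symm F, ?_, ?_⟩
  · have he : (fun i => F i • b i) = fun k => c k • w k := by
      funext k; rw [hbw]
    rwa [he] at hs
  · intro i
    have h1 : ⟪w i, b.repr.symm F⟫ = b.repr (b.repr.symm F) i := by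
      rw [b.repr_apply_apply, hbw]
    rw [h1, LinearIsometryEquiv.apply_symm_apply]

private lemma opA_single (hw_on : Orthonormal ℝ w) (μ : ℕ → ℝ) (s : ℝ) (N : ℕ) :
    opA w μ (s • w N) = (μ N * s) • w N := by
  have horth := orthonormal_iff_ite.mp hw_on
  rw [opA, tsum_eq_single N]
  · rw [real_inner_smul_left, horth N N]
    simp
  · intro k hk
    rw [real_inner_smul_left, horth N k]
    simp [(Ne.symm hk : ¬ N = k)]

private lemma inner_single (hw_on : Orthonormal ℝ w) (s : ℝ) (N k : ℕ) :
    ⟪s • w N, w k⟫ = if N = k then s else 0 := by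
  have horth := orthonormal_iff_ite.mp hw_on
  rw [real_inner_smul_left, horth N k]
  by_cases h : N = k <;> simp [h]

private lemma memW_single (hw_on : Orthonormal ℝ w) (ξ : ℕ → ℝ) (s : ℝ) (N : ℕ) :
    MemW w ξ (s • w N) := by
  apply summable_of_ne_finset_zero (s := {N})
  intro k hk
  simp only [Finset.mem_singleton] at hk
  rw [inner_single hw_on]
  simp [(Ne.symm hk : ¬ N = k)]

private lemma normW_single (hw_on : Orthonormal ℝ w) {ξ : ℕ → ℝ} {s : ℝ} {N : ℕ}
    (hξ : 0 < ξ N) (hs : |s| ≤ (ξ N)⁻¹) :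
    normW w ξ (s • w N) ≤ 1 := by
  rw [normW]
  have ht : (∑' k, ξ k ^ 2 * ⟪s • w N, w k⟫ ^ 2) = ξ N ^ 2 * s ^ 2 := by
    rw [tsum_eq_single N]
    · rw [inner_single hw_on]; simp
    · intro k hk
      rw [inner_single hw_on]
      simp [(Ne.symm hk : ¬ N = k)]
  rw [ht, show ξ N ^ 2 * s ^ 2 = (ξ N * |s|) ^ 2 by rw [mul_pow, sq_abs]]
  rw [Real.sqrt_sq (by positivity)]
  calc ξ N * |s| ≤ ξ N * (ξ N)⁻¹ := by
        exact mul_le_mul_of_nonneg_left hs hξ.le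
    _ = 1 := mul_inv_cancel₀ hξ.ne'

/-- The main upper bound for the truncation method. -/
private lemma trunc_err_le (hw_on : Orthonormal ℝ w)
    (hw_dense : Dense (Submodule.span ℝ (Set.range w) : Set H))
    {μ ξ : ℕ → ℝ}
    (hμ0 : 0 < μ 0) (hμmono : Monotone μ)
    (hξ0 : 0 < ξ 0) (hξmono : Monotone ξ)
    (hanti : Antitone fun k => μ k / ξ k)
    {N : ℕ} {δ : ℝ} (hδ : 0 < δ)
    {c₁'' : ℝ} (hc₁'' : 0 < c₁'')
    (h1 : c₁'' * δ ≤ 1 / ξ N)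
    {f fδ : H} (hfW : MemW w ξ f) (hfn : normW w ξ f ≤ 1)
    (hd : ‖f - fδ‖ ≤ δ) :
    ‖opA w μ f - Psitrunc w μ N (Gtrunc w N fδ)‖ ≤ (1 + 1 / c₁'') * (μ N / ξ N) := by
  have hμpos : ∀ k, 0 < μ k := fun k => hμ0.trans_le (hμmono k.zero_le)
  have hξpos : ∀ k, 0 < ξ k := fun k => hξ0.trans_le (hξmono k.zero_le)
  have horth := orthonormal_iff_ite.mp hw_on
  have hfW' : Summable fun k => ξ k ^ 2 * ⟪f, w k⟫ ^ 2 := hfW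
  -- summability of the coefficients of `opA f`
  have hc : Summable fun k => (μ k * ⟪f, w k⟫) ^ 2 := by
    apply Summable.of_nonneg_of_le (fun k => sq_nonneg _) _ (hfW'.mul_left ((μ 0 / ξ 0) ^ 2))
    intro k
    have hξk := hξpos k
    have he : (μ k * ⟪f, w k⟫) ^ 2 = (μ k / ξ k) ^ 2 * (ξ k ^ 2 * ⟪f, w k⟫ ^ 2) := by
      field_simp
    rw [he]
    apply mul_le_mul_of_nonneg_right _ (by positivity)
    exact pow_le_pow_left₀ (div_nonneg (hμpos k).le (hξpos k).le) (hanti k.zero_le) 2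
  obtain ⟨S, hS, hScoef⟩ := hasSum_coeff hw_on hw_dense hc
  have hopA : opA w μ f = S := hS.tsum_eq
  set g := opA w μ f - Psitrunc w μ N (Gtrunc w N fδ) with hgdef
  -- coefficients of g
  have hPsi : ∀ i, ⟪w i, Psitrunc w μ N (Gtrunc w N fδ)⟫
      = if i < N then μ i * ⟪fδ, w i⟫ else 0 := by
    intro i
    rw [Psitrunc, inner_sum]
    simp only [real_inner_smul_right, Gtrunc]
    rw [Fin.sum_univ_eq_sum_range (fun k => μ k * ⟪fδ, w k⟫ * ⟪w i, w k⟫) N]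
    have he : ∀ k, μ k * ⟪fδ, w k⟫ * ⟪w i, w k⟫
        = if i = k then μ k * ⟪fδ, w k⟫ else 0 := by
      intro k; rw [horth i k]; by_cases h : i = k <;> simp [h]
    rw [Finset.sum_congr rfl (fun k _ => he k), Finset.sum_ite_eq (Finset.range N) i]
    simp [Finset.mem_range]
  have hg : ∀ i, ⟪w i, g⟫ = if i < N then μ i * ⟪f - fδ, w i⟫ else μ i * ⟪f, w i⟫ := by
    intro i
    rw [hgdef, inner_sub_right, hopA, hScoef i, hPsi i]
    by_cases h : i < N
    · simp only [h, if_true]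
      rw [inner_sub_left]; ring
    · simp [h]
  -- Parseval for g
  have hPar := parseval hw_on hw_dense g
  have hsq : Summable fun i => ⟪w i, g⟫ ^ 2 := hPar.summable
  have hsplit := Summable.sum_add_tsum_compl (s := Finset.range N) hsq
  -- head bound
  have hdn : 0 ≤ ‖f - fδ‖ := norm_nonneg _
  have hhead : ∑ i ∈ Finset.range N, ⟪w i, g⟫ ^ 2 ≤ μ N ^ 2 * δ ^ 2 := by
    have h1' : ∀ i ∈ Finset.range N, ⟪w i, g⟫ ^ 2 ≤ μ N ^ 2 * ⟪f - fδ, w i⟫ ^ 2 := by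
      intro i hi
      rw [Finset.mem_range] at hi
      rw [hg i, if_pos hi, mul_pow]
      apply mul_le_mul_of_nonneg_right _ (sq_nonneg _)
      exact pow_le_pow_left₀ (hμpos i).le (hμmono hi.le) 2
    calc ∑ i ∈ Finset.range N, ⟪w i, g⟫ ^ 2
        ≤ ∑ i ∈ Finset.range N, μ N ^ 2 * ⟪f - fδ, w i⟫ ^ 2 := Finset.sum_le_sum h1'
      _ = μ N ^ 2 * ∑ i ∈ Finset.range N, ⟪f - fδ, w i⟫ ^ 2 := by rw [Finset.mul_sum]
      _ ≤ μ N ^ 2 * ‖f - fδ‖ ^ 2 := by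
          apply mul_le_mul_of_nonneg_left _ (sq_nonneg _)
          have hb := hw_on.sum_inner_products_le (s := Finset.range N) (f - fδ)
          have he : ∀ i, ‖⟪w i, f - fδ⟫‖ ^ 2 = ⟪f - fδ, w i⟫ ^ 2 := by
            intro i
            rw [Real.norm_eq_abs, sq_abs, real_inner_comm]
          rwa [Finset.sum_congr rfl (fun i _ => he i)] at hb
      _ ≤ μ N ^ 2 * δ ^ 2 := by
          apply mul_le_mul_of_nonneg_left _ (sq_nonneg _)
          exact pow_le_pow_left₀ hdn hd 2
  -- tail bound
  have hWn : (∑' k, ξ k ^ 2 * ⟪f, w k⟫ ^ 2) ≤ 1 := by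
    have h0 : (0:ℝ) ≤ ∑' k, ξ k ^ 2 * ⟪f, w k⟫ ^ 2 :=
      tsum_nonneg (fun k => by positivity)
    rw [normW] at hfn
    nlinarith [Real.sq_sqrt h0, hfn, Real.sqrt_nonneg (∑' k, ξ k ^ 2 * ⟪f, w k⟫ ^ 2)]
  have htail : (∑' i : ↑((Finset.range N : Finset ℕ) : Set ℕ)ᶜ, ⟪w ↑i, g⟫ ^ 2)
      ≤ (μ N / ξ N) ^ 2 := by
    have hterm : ∀ i : ↑((Finset.range N : Finset ℕ) : Set ℕ)ᶜ,
        ⟪w ↑i, g⟫ ^ 2 ≤ (μ N / ξ N) ^ 2 * (ξ (↑i : ℕ) ^ 2 * ⟪f, w ↑i⟫ ^ 2) := by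
      rintro ⟨i, hi⟩
      simp only [Set.mem_compl_iff, Finset.coe_range, Set.mem_Iio, not_lt] at hi
      have hiN : ¬ i < N := not_lt.mpr hi
      rw [hg i, if_neg hiN]
      have hξi := hξpos i
      have he : (μ i * ⟪f, w i⟫) ^ 2 = (μ i / ξ i) ^ 2 * (ξ i ^ 2 * ⟪f, w i⟫ ^ 2) := by
        field_simp
      rw [he]
      apply mul_le_mul_of_nonneg_right _ (by positivity)
      exact pow_le_pow_left₀ (div_nonneg (hμpos i).le (hξpos i).le) (hanti hi) 2
    calc (∑' i : ↑((Finset.range N : Finset ℕ) : Set ℕ)ᶜ, ⟪w ↑i, g⟫ ^ 2)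
        ≤ ∑' i : ↑((Finset.range N : Finset ℕ) : Set ℕ)ᶜ,
            (μ N / ξ N) ^ 2 * (ξ (↑i : ℕ) ^ 2 * ⟪f, w ↑i⟫ ^ 2) := by
          apply Summable.tsum_le_tsum hterm (hsq.subtype _)
          exact ((hfW'.mul_left ((μ N / ξ N) ^ 2)).subtype _)
      _ = (μ N / ξ N) ^ 2 * ∑' i : ↑((Finset.range N : Finset ℕ) : Set ℕ)ᶜ,
            (ξ (↑i : ℕ) ^ 2 * ⟪f, w ↑i⟫ ^ 2) := by
          exact tsum_mul_left
      _ ≤ (μ N / ξ N) ^ 2 * ∑' k, ξ k ^ 2 * ⟪f, w k⟫ ^ 2 := by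
          apply mul_le_mul_of_nonneg_left _ (sq_nonneg _)
          apply Summable.tsum_le_tsum_of_inj (Subtype.val) Subtype.val_injective
            (fun c _ => by positivity) (fun i => le_rfl) (hfW'.subtype _) hfW'
      _ ≤ (μ N / ξ N) ^ 2 * 1 := by
          exact mul_le_mul_of_nonneg_left hWn (sq_nonneg _)
      _ = (μ N / ξ N) ^ 2 := mul_one _
  -- combine
  have hg2 : ‖g‖ ^ 2 ≤ μ N ^ 2 * δ ^ 2 + (μ N / ξ N) ^ 2 := by
    rw [← hPar.tsum_eq, ← hsplit]
    exact add_le_add hhead htail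
  have hδle : δ ≤ 1 / (c₁'' * ξ N) := by
    rw [le_div_iff₀ (mul_pos hc₁'' (hξpos N))]
    calc δ * (c₁'' * ξ N) = (c₁'' * δ) * ξ N := by ring
      _ ≤ (1 / ξ N) * ξ N := mul_le_mul_of_nonneg_right h1 (hξpos N).le
      _ = 1 := one_div_mul_cancel (hξpos N).ne'
  have hr : 0 < μ N / ξ N := div_pos (hμpos N) (hξpos N)
  have hfin : ‖g‖ ^ 2 ≤ ((1 + 1 / c₁'') * (μ N / ξ N)) ^ 2 := by
    have hμδ : μ N * δ ≤ (1 / c₁'') * (μ N / ξ N) := by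
      calc μ N * δ ≤ μ N * (1 / (c₁'' * ξ N)) :=
            mul_le_mul_of_nonneg_left hδle (hμpos N).le
        _ = (1 / c₁'') * (μ N / ξ N) := by field_simp
    nlinarith [hg2, sq_nonneg (μ N * δ), mul_pos (hμpos N) hδ, hr,
      mul_pos (mul_pos (hμpos N) hδ) hr]
  calc ‖g‖ = Real.sqrt (‖g‖ ^ 2) := (Real.sqrt_sq (norm_nonneg g)).symm
    _ ≤ Real.sqrt (((1 + 1 / c₁'') * (μ N / ξ N)) ^ 2) := Real.sqrt_le_sqrt hfin
    _ = (1 + 1 / c₁'') * (μ N / ξ N) := Real.sqrt_sq (mul_nonneg (by positivity) hr.le)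

end Aux

/-- order optimality of the truncation method for slowly growing `ξ`. -/
theorem stmt12
    (w : ℕ → H) (hw_on : Orthonormal ℝ w)
    (hw_dense : Dense (Submodule.span ℝ (Set.range w) : Set H))
    (μ ξ : ℕ → ℝ)
    (hμ0 : 0 < μ 0) (hμmono : Monotone μ) (hμtop : Tendsto μ atTop atTop)
    (hξ0 : 0 < ξ 0) (hξmono : Monotone ξ) (hξtop : Tendsto ξ atTop atTop)
    (hratio : Tendsto (fun k => μ k / ξ k) atTop (nhds 0))
    (hanti : Antitone fun k => μ k / ξ k)
    (c η α β : ℝ) (hc : 0 < c) (hβ0 : 0 ≤ β) (hβ1 : β ≤ 1)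
    (hη : 0 ≤ η) (hα : 0 ≤ α) (hαη : 0 < α + η)
    (hξdef : ∀ k : ℕ, ξ k = c * max 1 (k : ℝ) ^ η * Real.exp (α * (k : ℝ) ^ β))
    (c₁'' c₂'' : ℝ) (hc₁'' : 0 < c₁'') (hc₁₂'' : c₁'' ≤ c₂'') :
    ∃ c' c'' : ℝ, 0 < c' ∧ 0 < c'' ∧
      ∀ δ : ℝ, 0 < δ → ∀ N : ℕ, 1 ≤ N →
        c₁'' * δ ≤ 1 / ξ N → 1 / ξ N ≤ c₂'' * δ →
          ENNReal.ofReal (c' * (μ N / ξ N)) ≤ RoptAll w μ ξ δ ∧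
            RoptAll w μ ξ δ ≤ Ropt w μ ξ δ N ∧
              Ropt w μ ξ δ N ≤ ENNReal.ofReal (c'' * (μ N / ξ N)) ∧
              recErr w μ ξ δ (Gtrunc w N) (Psitrunc w μ N) ≤
                ENNReal.ofReal (c'' * (μ N / ξ N)) := by
  have hμpos : ∀ k, 0 < μ k := fun k => hμ0.trans_le (hμmono k.zero_le)
  have hξpos : ∀ k, 0 < ξ k := fun k => hξ0.trans_le (hξmono k.zero_le)
  have hc₂'' : 0 < c₂'' := lt_of_lt_of_le hc₁'' hc₁₂''
  refine ⟨min 1 c₂''⁻¹, 1 + 1 / c₁'', lt_min one_pos (inv_pos.mpr hc₂''), by positivity, ?_⟩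
  intro δ hδ N hN h1 h2
  set c' := min 1 c₂''⁻¹ with hc'
  have hrpos : 0 < μ N / ξ N := div_pos (hμpos N) (hξpos N)
  -- upper bound for the truncation method
  have hub : recErr w μ ξ δ (Gtrunc w N) (Psitrunc w μ N) ≤
      ENNReal.ofReal ((1 + 1 / c₁'') * (μ N / ξ N)) := by
    refine iSup_le fun f => iSup_le fun hf => iSup_le fun fδ => iSup_le fun hd => ?_
    exact ENNReal.ofReal_le_ofReal
      (trunc_err_le hw_on hw_dense hμ0 hμmono hξ0 hξmono hanti hδ hc₁'' h1 hf.1 hf.2 hd)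
  have hGcont : Continuous (Gtrunc w N) :=
    continuous_pi fun k => Continuous.inner continuous_id continuous_const
  have hRopt : Ropt w μ ξ δ N ≤ recErr w μ ξ δ (Gtrunc w N) (Psitrunc w μ N) := by
    refine le_trans (iInf_le _ (Gtrunc w N)) ?_
    refine le_trans (iInf_le _ hGcont) (iInf_le _ (Psitrunc w μ N))
  -- lower bound
  have hlb : ENNReal.ofReal (c' * (μ N / ξ N)) ≤ RoptAll w μ ξ δ := by
    refine le_iInf fun N' => le_iInf fun G => le_iInf fun _hG => le_iInf fun Ψ => ?_
    set t := min δ (ξ N)⁻¹ with htdef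
    have ht0 : 0 < t := lt_min hδ (inv_pos.mpr (hξpos N))
    have htξ : t ≤ (ξ N)⁻¹ := min_le_right _ _
    have htδ : t ≤ δ := min_le_left _ _
    set y := Ψ (G 0) with hy
    have herr : ∀ s : ℝ, |s| ≤ t →
        ENNReal.ofReal ‖opA w μ (s • w N) - y‖ ≤ recErr w μ ξ δ G Ψ := by
      intro s hs
      have hsmem : MemW w ξ (s • w N) ∧ normW w ξ (s • w N) ≤ 1 :=
        ⟨memW_single hw_on ξ s N, normW_single hw_on (hξpos N) (hs.trans htξ)⟩
      have hdist : ‖s • w N - 0‖ ≤ δ := by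
        rw [sub_zero, norm_smul, hw_on.1 N, mul_one, Real.norm_eq_abs]
        exact hs.trans htδ
      calc ENNReal.ofReal ‖opA w μ (s • w N) - y‖
          ≤ ⨆ (_ : ‖s • w N - (0:H)‖ ≤ δ), ENNReal.ofReal ‖opA w μ (s • w N) - Ψ (G 0)‖ :=
            le_iSup_of_le hdist le_rfl
        _ ≤ ⨆ (fδ : H) (_ : ‖s • w N - fδ‖ ≤ δ), ENNReal.ofReal ‖opA w μ (s • w N) - Ψ (G fδ)‖ :=
            le_iSup_of_le (0:H) le_rfl
        _ ≤ recErr w μ ξ δ G Ψ := by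
            refine le_trans ?_ (le_iSup _ (s • w N))
            exact le_iSup_of_le hsmem le_rfl
    have hu : opA w μ (t • w N) = (μ N * t) • w N := opA_single hw_on μ t N
    have hu' : opA w μ ((-t) • w N) = -((μ N * t) • w N) := by
      rw [opA_single hw_on μ (-t) N, mul_neg, neg_smul]
    set u := (μ N * t) • w N with hudef
    have hnu : ‖u‖ = μ N * t := by
      rw [hudef, norm_smul, hw_on.1 N, mul_one, Real.norm_eq_abs,
        abs_of_pos (mul_pos (hμpos N) ht0)]
    have htri : μ N * t ≤ ‖u - y‖ ∨ μ N * t ≤ ‖-u - y‖ := by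
      by_contra hcon
      push_neg at hcon
      have he : (u - y) - (-u - y) = u + u := by abel
      have h2 : ‖(u - y) - (-u - y)‖ ≤ ‖u - y‖ + ‖-u - y‖ := norm_sub_le _ _
      rw [he] at h2
      have h3 : ‖u + u‖ = 2 * ‖u‖ := by
        rw [← two_smul ℝ u, norm_smul]
        simp
      rw [h3, hnu] at h2
      linarith [hcon.1, hcon.2]
    have hle : c' * (μ N / ξ N) ≤ μ N * t := by
      have h1' : c' / ξ N ≤ t := by
        apply le_min
        · calc c' / ξ N ≤ c₂''⁻¹ / ξ N :=
                (div_le_div_iff_of_pos_right (hξpos N)).mpr (min_le_right 1 c₂''⁻¹)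
            _ = c₂''⁻¹ * (1 / ξ N) := by rw [div_eq_mul_inv, one_div, mul_comm]
            _ ≤ c₂''⁻¹ * (c₂'' * δ) := mul_le_mul_of_nonneg_left h2 (inv_nonneg.mpr hc₂''.le)
            _ = δ := by field_simp
        · calc c' / ξ N ≤ 1 / ξ N :=
                (div_le_div_iff_of_pos_right (hξpos N)).mpr (min_le_left 1 c₂''⁻¹)
            _ = (ξ N)⁻¹ := one_div _
      calc c' * (μ N / ξ N) = μ N * (c' / ξ N) := by ring
        _ ≤ μ N * t := mul_le_mul_of_nonneg_left h1' (hμpos N).le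
    rcases htri with h | h
    · have hh := herr t (le_of_eq (abs_of_pos ht0))
      rw [hu] at hh
      exact le_trans (ENNReal.ofReal_le_ofReal (hle.trans h)) hh
    · have hh := herr (-t) (by rw [abs_neg]; exact le_of_eq (abs_of_pos ht0))
      rw [hu'] at hh
      exact le_trans (ENNReal.ofReal_le_ofReal (hle.trans h)) hh
  exact ⟨hlb, iInf_le _ N, hRopt.trans hub, hub⟩
end
end
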